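/- arXiv:1011.0966 — 9 statements merged into one kernel-verified Lean document; each statement's English description precedes it below -/
import Mathlib

section
/- Let r, s, t ≥ 0 satisfy min(r,s) > t and r + s > 1/2 + t. Then there exists a constant C > 0 such that for every 2π-periodic function f ∈ H^r and every square-integrable 2π-periodic function g, the pointwise product fg satisfies ‖fg‖_{−s} ≤ C ‖f‖_r ‖g‖_{−t}, with C independent of f and g. (This is the dual Sobolev product estimate, obtained by duality from ‖fg‖_t ≲ ‖f‖_r ‖g‖_s.) -/
/-!
Write `⟨k⟩² = 1 + k²` (`bracketSq k`). By Parseval, the Fourier coefficients of `f g` are the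
convolution `Σ_m f̂_m ĝ_{k-m}`, so everything reduces to sequences on `ℤ`. Put
`a_m = ⟨m⟩^r |f̂_m|` and `b_j = ⟨j⟩^{-t} |ĝ_j|`; the weight left over on `a_m b_{k-m}` is
`⟨k⟩^{-s} ⟨m⟩^{-r} ⟨k-m⟩^t`. Peetre's inequality `⟨k-m⟩² ≤ 4 max(⟨k⟩², ⟨m⟩²)` and
`t ≤ min r s` bound it by `2^t (⟨k⟩^{-γ} + ⟨m⟩^{-γ})` with `γ = r + s - t`: the smaller of
the two frequencies absorbs the whole decay. Each of the two resulting terms is bounded in `ℓ²`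
by Cauchy–Schwarz against `Σ_j ⟨j⟩^{-2γ}`, which is finite because `γ > 1/2`. Working in
`ℝ≥0∞` postpones all summability questions to the final comparison with the real norms.
-/

open MeasureTheory Real AddCircle

instance : Fact (0 < 2 * π) := ⟨by positivity⟩

/-- The squared Sobolev norm `‖u‖_σ² = Σ_{k∈ℤ} (1+k²)^σ |u_k|²` of a `2π`-periodic
function, expressed via its Fourier coefficients. -/
noncomputable def sobFnNormSq (σ : ℝ) (u : AddCircle (2 * π) → ℂ) : ℝ :=
  ∑' k : ℤ, (1 + (k : ℝ) ^ 2) ^ σ * ‖fourierCoeff u k‖ ^ 2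

open scoped ENNReal

namespace ENNReal

theorem tsum_mul_sq_le {ι : Type*} (f g : ι → ℝ≥0∞) :
    (∑' i, f i * g i) ^ 2 ≤ (∑' i, f i ^ 2) * ∑' i, g i ^ 2 := by
  let _ : MeasurableSpace ι := ⊤
  have holder := lintegral_mul_le_Lp_mul_Lq Measure.count .two_two
    measurable_from_top.aemeasurable measurable_from_top.aemeasurable (f := f) (g := g)
  simp only [lintegral_count, Pi.mul_apply, rpow_two] at holder
  have sq_sqrt (x : ℝ≥0∞) : (x ^ (1 / 2 : ℝ)) ^ 2 = x := by
    rw [← rpow_two, ← rpow_mul]; norm_num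
  calc (∑' i, f i * g i) ^ 2
      ≤ ((∑' i, f i ^ 2) ^ (1 / 2 : ℝ) * (∑' i, g i ^ 2) ^ (1 / 2 : ℝ)) ^ 2 := by
        gcongr
    _ = (∑' i, f i ^ 2) * ∑' i, g i ^ 2 := by rw [mul_pow, sq_sqrt, sq_sqrt]

theorem add_sq_le_two_mul (a b : ℝ≥0∞) : (a + b) ^ 2 ≤ 2 * (a ^ 2 + b ^ 2) := by
  rcases eq_or_ne a ⊤ with rfl | ha
  · simp
  rcases eq_or_ne b ⊤ with rfl | hb
  · simp
  lift a to NNReal using ha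
  lift b to NNReal using hb
  exact_mod_cast add_sq_le (a := a) (b := b)

theorem rpow_sq_eq_rpow_two_mul (x : ℝ≥0∞) (c : ℝ) : (x ^ c) ^ 2 = x ^ (2 * c) := by
  rw [← ENNReal.rpow_two, ← ENNReal.rpow_mul, mul_comm]

theorem rpow_neg_le_rpow_neg {x y : ℝ≥0∞} {c : ℝ} (hc : 0 ≤ c) (h : x ≤ y) :
    y ^ (-c) ≤ x ^ (-c) := by
  rw [ENNReal.rpow_neg, ENNReal.rpow_neg]
  exact ENNReal.inv_le_inv.2 (ENNReal.rpow_le_rpow h hc)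

theorem rpow_neg_mul_rpow_neg_mul_rpow_le {x y z : ℝ≥0∞} (hx₀ : x ≠ 0) (hx : x ≠ ⊤)
    (hy₀ : y ≠ 0) (hy : y ≠ ⊤) (hz : z ≤ 4 * max x y) {r s t : ℝ} (ht : 0 ≤ t)
    (htr : t ≤ r) (hts : t ≤ s) :
    x ^ (-s) * y ^ (-r) * z ^ t ≤ 4 ^ t * (x ^ (-(r + s - t)) + y ^ (-(r + s - t))) := by
  rcases le_total x y with hxy | hyx
  · have hz' : z ^ t ≤ 4 ^ t * y ^ t := by
      rw [← ENNReal.mul_rpow_of_nonneg _ _ ht, ← max_eq_right hxy]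
      exact ENNReal.rpow_le_rpow hz ht
    calc x ^ (-s) * y ^ (-r) * z ^ t ≤ x ^ (-s) * y ^ (-r) * (4 ^ t * y ^ t) := by gcongr
      _ = 4 ^ t * (x ^ (-s) * y ^ (-(r - t))) := by
        rw [show -(r - t) = -r + t by ring, ENNReal.rpow_add _ _ hy₀ hy]; ring
      _ ≤ 4 ^ t * (x ^ (-s) * x ^ (-(r - t))) :=
        mul_le_mul_right (mul_le_mul_right (rpow_neg_le_rpow_neg (by linarith) hxy) _) _
      _ = 4 ^ t * x ^ (-(r + s - t)) := by
        rw [← ENNReal.rpow_add _ _ hx₀ hx]; ring_nf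
      _ ≤ _ := by gcongr; exact le_self_add
  · have hz' : z ^ t ≤ 4 ^ t * x ^ t := by
      rw [← ENNReal.mul_rpow_of_nonneg _ _ ht, ← max_eq_left hyx]
      exact ENNReal.rpow_le_rpow hz ht
    calc x ^ (-s) * y ^ (-r) * z ^ t ≤ x ^ (-s) * y ^ (-r) * (4 ^ t * x ^ t) := by gcongr
      _ = 4 ^ t * (x ^ (-(s - t)) * y ^ (-r)) := by
        rw [show -(s - t) = -s + t by ring, ENNReal.rpow_add _ _ hx₀ hx]; ring
      _ ≤ 4 ^ t * (y ^ (-(s - t)) * y ^ (-r)) :=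
        mul_le_mul_right (mul_le_mul_left (rpow_neg_le_rpow_neg (by linarith) hyx) _) _
      _ = 4 ^ t * y ^ (-(r + s - t)) := by
        rw [← ENNReal.rpow_add _ _ hy₀ hy]; ring_nf
      _ ≤ _ := by gcongr; exact le_add_self

end ENNReal

section Convolution

variable {G : Type*} [AddGroup G]

theorem tsum_sq_mul_conv_le (w a b : G → ℝ≥0∞) :
    ∑' k, (w k * ∑' m, a m * b (k - m)) ^ 2 ≤
      (∑' k, w k ^ 2) * (∑' m, a m ^ 2) * ∑' m, b m ^ 2 := by
  have hconv (k : G) : (∑' m, a m * b (k - m)) ^ 2 ≤ (∑' m, a m ^ 2) * ∑' m, b m ^ 2 :=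
    (ENNReal.tsum_mul_sq_le a _).trans_eq <| by
      congr 1; exact (Equiv.subLeft k).tsum_eq fun j => b j ^ 2
  calc ∑' k, (w k * ∑' m, a m * b (k - m)) ^ 2
      ≤ ∑' k, w k ^ 2 * ((∑' m, a m ^ 2) * ∑' m, b m ^ 2) :=
        ENNReal.tsum_le_tsum fun k => by rw [mul_pow]; gcongr; exact hconv k
    _ = _ := by rw [ENNReal.tsum_mul_right, mul_assoc]

theorem tsum_sq_conv_mul_le (w a b : G → ℝ≥0∞) :
    ∑' k, (∑' m, w m * a m * b (k - m)) ^ 2 ≤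
      (∑' k, w k ^ 2) * (∑' m, a m ^ 2) * ∑' m, b m ^ 2 := by
  have hshift (m : G) : ∑' k, b (k - m) ^ 2 = ∑' j, b j ^ 2 :=
    (Equiv.subRight m).tsum_eq fun j => b j ^ 2
  calc ∑' k, (∑' m, w m * a m * b (k - m)) ^ 2
      ≤ ∑' k, (∑' m, w m ^ 2) * ∑' m, (a m * b (k - m)) ^ 2 :=
        ENNReal.tsum_le_tsum fun k => by
          simpa only [mul_assoc] using ENNReal.tsum_mul_sq_le w fun m => a m * b (k - m)
    _ = (∑' m, w m ^ 2) * ∑' m, a m ^ 2 * ∑' k, b (k - m) ^ 2 := by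
        rw [ENNReal.tsum_mul_left]
        simp_rw [mul_pow]
        rw [ENNReal.tsum_comm]
        simp_rw [ENNReal.tsum_mul_left]
    _ = _ := by simp_rw [hshift, ENNReal.tsum_mul_right, mul_assoc]

end Convolution

noncomputable def bracketSq (k : ℤ) : ℝ≥0∞ := ENNReal.ofReal (1 + (k : ℝ) ^ 2)

lemma bracketSq_rpow (k : ℤ) (σ : ℝ) :
    bracketSq k ^ σ = ENNReal.ofReal ((1 + (k : ℝ) ^ 2) ^ σ) :=
  ENNReal.ofReal_rpow_of_pos (by positivity)

lemma one_le_bracketSq (k : ℤ) : 1 ≤ bracketSq k :=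
  ENNReal.one_le_ofReal.2 (by nlinarith)

lemma bracketSq_ne_zero (k : ℤ) : bracketSq k ≠ 0 :=
  (zero_lt_one.trans_le (one_le_bracketSq k)).ne'

lemma bracketSq_ne_top (k : ℤ) : bracketSq k ≠ ⊤ := ENNReal.ofReal_ne_top

lemma bracketSq_sub_le (k m : ℤ) : bracketSq (k - m) ≤ 4 * max (bracketSq k) (bracketSq m) := by
  have h : 1 + ((k - m : ℤ) : ℝ) ^ 2 ≤ 2 * (1 + (k : ℝ) ^ 2) + 2 * (1 + (m : ℝ) ^ 2) := by
    push_cast; nlinarith [sq_nonneg ((k : ℝ) + m)]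
  calc bracketSq (k - m) ≤ 2 * bracketSq k + 2 * bracketSq m := by
        refine (ENNReal.ofReal_le_ofReal h).trans_eq ?_
        rw [ENNReal.ofReal_add (by positivity) (by positivity), ENNReal.ofReal_mul zero_le_two,
          ENNReal.ofReal_mul zero_le_two, ENNReal.ofReal_ofNat, bracketSq, bracketSq]
    _ ≤ 2 * max (bracketSq k) (bracketSq m) + 2 * max (bracketSq k) (bracketSq m) := by
        gcongr
        exacts [le_max_left _ _, le_max_right _ _]
    _ = 4 * max (bracketSq k) (bracketSq m) := by ring

lemma bracketSq_weight_le {r s t : ℝ} (ht : 0 ≤ t) (htr : t ≤ r) (hts : t ≤ s) (k m : ℤ) :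
    bracketSq k ^ (-s) * bracketSq m ^ (-r) * bracketSq (k - m) ^ t ≤
      4 ^ t * (bracketSq k ^ (-(r + s - t)) + bracketSq m ^ (-(r + s - t))) :=
  ENNReal.rpow_neg_mul_rpow_neg_mul_rpow_le (bracketSq_ne_zero k) (bracketSq_ne_top k)
    (bracketSq_ne_zero m) (bracketSq_ne_top m) (bracketSq_sub_le k m) ht htr hts

lemma tsum_bracketSq_rpow_neg_ne_top {σ : ℝ} (hσ : 1 / 2 < σ) :
    ∑' k : ℤ, bracketSq k ^ (-σ) ≠ ⊤ := by
  simp_rw [bracketSq_rpow]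
  refine Summable.tsum_ofReal_ne_top <|
    (Real.summable_abs_int_rpow (b := 2 * σ) (by linarith)).of_norm_bounded_eventually ?_
  filter_upwards [(Set.finite_singleton (0 : ℤ)).compl_mem_cofinite] with k hk
  have hpos : (0 : ℝ) < (k : ℝ) ^ 2 := by
    have : k ≠ 0 := hk
    positivity
  rw [Real.norm_of_nonneg (by positivity), show -(2 * σ) = (2 : ℕ) * -σ by push_cast; ring,
    Real.rpow_natCast_mul (abs_nonneg _), sq_abs]
  exact Real.rpow_le_rpow_of_nonpos hpos (by linarith) (by linarith)

theorem tsum_bracketSq_mul_conv_sq_le {r s t : ℝ} (ht : 0 ≤ t) (htr : t ≤ r) (hts : t ≤ s)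
    (A B : ℤ → ℝ≥0∞) :
    ∑' k, bracketSq k ^ (-s) * (∑' m, A m * B (k - m)) ^ 2 ≤
      4 ^ t * 4 * (∑' k, bracketSq k ^ (-(r + s - t))) *
        (∑' m, bracketSq m ^ r * A m ^ 2) * ∑' m, bracketSq m ^ (-t) * B m ^ 2 := by
  have cancel (k : ℤ) (c : ℝ) (y : ℝ≥0∞) :
      bracketSq k ^ (-c) * (bracketSq k ^ c * y) = y := by
    rw [← mul_assoc, ← ENNReal.rpow_add _ _ (bracketSq_ne_zero k) (bracketSq_ne_top k),
      neg_add_cancel, ENNReal.rpow_zero, one_mul]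
  set w : ℤ → ℝ≥0∞ := fun k => bracketSq k ^ (-((r + s - t) / 2)) with hw
  set a : ℤ → ℝ≥0∞ := fun m => bracketSq m ^ (r / 2) * A m with ha
  set b : ℤ → ℝ≥0∞ := fun m => bracketSq m ^ (-(t / 2)) * B m with hb
  have hpointwise (k : ℤ) : bracketSq k ^ (-(s / 2)) * ∑' m, A m * B (k - m) ≤
      4 ^ (t / 2) * (w k * ∑' m, a m * b (k - m) + ∑' m, w m * a m * b (k - m)) := by
    rw [← ENNReal.tsum_mul_left, ← ENNReal.tsum_mul_left, ← ENNReal.tsum_add,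
      ← ENNReal.tsum_mul_left]
    refine ENNReal.tsum_le_tsum fun m => ?_
    have hweight := bracketSq_weight_le (r := r / 2) (s := s / 2) (t := t / 2)
      (by linarith) (by linarith) (by linarith) k m
    rw [show -(r / 2 + s / 2 - t / 2) = -((r + s - t) / 2) by ring] at hweight
    calc bracketSq k ^ (-(s / 2)) * (A m * B (k - m))
        = bracketSq k ^ (-(s / 2)) * bracketSq m ^ (-(r / 2)) * bracketSq (k - m) ^ (t / 2) *
            (a m * b (k - m)) := by
          rw [← cancel m (r / 2) (A m), ← cancel (k - m) (-(t / 2)) (B (k - m)), neg_neg]; ring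
      _ ≤ 4 ^ (t / 2) * (w k + w m) * (a m * b (k - m)) := by gcongr
      _ = _ := by ring
  calc ∑' k, bracketSq k ^ (-s) * (∑' m, A m * B (k - m)) ^ 2
      = ∑' k, (bracketSq k ^ (-(s / 2)) * ∑' m, A m * B (k - m)) ^ 2 := by
        simp_rw [mul_pow, ENNReal.rpow_sq_eq_rpow_two_mul]; ring_nf
    _ ≤ ∑' k, (4 ^ (t / 2) *
          (w k * ∑' m, a m * b (k - m) + ∑' m, w m * a m * b (k - m))) ^ 2 :=
        ENNReal.tsum_le_tsum fun k => by gcongr ?_ ^ 2; exact hpointwise k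
    _ ≤ ∑' k, 4 ^ t * (2 * ((w k * ∑' m, a m * b (k - m)) ^ 2 +
          (∑' m, w m * a m * b (k - m)) ^ 2)) := by
        refine ENNReal.tsum_le_tsum fun k => ?_
        rw [mul_pow, ENNReal.rpow_sq_eq_rpow_two_mul, mul_div_cancel₀ _ two_ne_zero]
        gcongr
        exact ENNReal.add_sq_le_two_mul _ _
    _ = 4 ^ t * 2 * (∑' k, (w k * ∑' m, a m * b (k - m)) ^ 2 +
          ∑' k, (∑' m, w m * a m * b (k - m)) ^ 2) := by
        rw [ENNReal.tsum_mul_left, ENNReal.tsum_mul_left, ENNReal.tsum_add, mul_assoc]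
    _ ≤ 4 ^ t * 2 * ((∑' k, w k ^ 2) * (∑' m, a m ^ 2) * ∑' m, b m ^ 2 +
          (∑' k, w k ^ 2) * (∑' m, a m ^ 2) * ∑' m, b m ^ 2) := by
        gcongr
        exacts [tsum_sq_mul_conv_le w a b, tsum_sq_conv_mul_le w a b]
    _ = _ := by
        simp only [hw, ha, hb, mul_pow, ENNReal.rpow_sq_eq_rpow_two_mul]
        ring_nf

section PeriodicFunctions

variable {T : ℝ} [Fact (0 < T)]

lemma fourierCoeff_star (f : AddCircle T → ℂ) (n : ℤ) :
    fourierCoeff (star f) n = star (fourierCoeff f (-n)) := by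
  simp only [fourierCoeff, ← integral_conj, Pi.star_apply, smul_eq_mul, map_mul, neg_neg,
    fourier_neg, RCLike.star_def]

lemma fourierCoeff_fourier_mul (g : AddCircle T → ℂ) (k n : ℤ) :
    fourierCoeff (fun x => fourier k x * g x) n = fourierCoeff g (n - k) := by
  simp only [fourierCoeff, smul_eq_mul, ← mul_assoc, ← fourier_add, neg_sub, neg_add_eq_sub]

lemma memLp_fourier_mul {g : AddCircle T → ℂ} (hg : MemLp g 2 haarAddCircle) (k : ℤ) :
    MemLp (fun x => fourier k x * g x) 2 haarAddCircle :=
  hg.of_le ((fourier k).continuous.aestronglyMeasurable.mul hg.1) <| .of_forall fun x => by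
    simp [Circle.norm_coe]

lemma summable_sq_norm_fourierCoeff {f : AddCircle T → ℂ} (hf : MemLp f 2 haarAddCircle) :
    Summable fun n : ℤ => ‖fourierCoeff f n‖ ^ 2 := by
  simpa [fourierCoeff_congr_ae hf.coeFn_toLp] using
    (hasSum_sq_fourierCoeff (hf.toLp f)).summable

/-- Parseval's identity applied to `⟪conj f, e_{-k} g⟫`. -/
theorem fourierCoeff_mul {f g : AddCircle T → ℂ} (hf : MemLp f 2 haarAddCircle)
    (hg : MemLp g 2 haarAddCircle) (k : ℤ) :
    fourierCoeff (fun x => f x * g x) k = ∑' m, fourierCoeff f m * fourierCoeff g (k - m) := by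
  have hf' := hf.star
  have hg' := memLp_fourier_mul hg (-k)
  have hinner : inner ℂ (hf'.toLp _) (hg'.toLp _) = fourierCoeff (fun x => f x * g x) k := by
    rw [L2.inner_def]
    refine integral_congr_ae ?_
    filter_upwards [hf'.coeFn_toLp, hg'.coeFn_toLp] with x hxf hxg
    rw [hxf, hxg, RCLike.inner_apply, Pi.star_apply, RCLike.star_def, Complex.conj_conj,
      smul_eq_mul]
    ring
  rw [← hinner, ← fourierBasis.tsum_inner_mul_inner, ← (Equiv.neg ℤ).tsum_eq]
  refine tsum_congr fun m => ?_
  rw [← inner_conj_symm, ← fourierBasis.repr_apply_apply, ← fourierBasis.repr_apply_apply,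
    fourierBasis_repr, fourierBasis_repr, fourierCoeff_congr_ae hf'.coeFn_toLp,
    fourierCoeff_congr_ae hg'.coeFn_toLp, fourierCoeff_star, fourierCoeff_fourier_mul]
  simp [sub_eq_add_neg, add_comm]

/-- The squared `H^σ` norm in `ℝ≥0∞`: it is `⊤` off `H^σ`, where the real `tsum` is a junk `0`. -/
noncomputable def sobENormSq (σ : ℝ) (u : AddCircle T → ℂ) : ℝ≥0∞ :=
  ∑' k : ℤ, bracketSq k ^ σ * ‖fourierCoeff u k‖ₑ ^ 2

theorem sobENormSq_mul_le {r s t : ℝ} (ht : 0 ≤ t) (htr : t ≤ r) (hts : t ≤ s)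
    {f g : AddCircle T → ℂ} (hf : MemLp f 2 haarAddCircle) (hg : MemLp g 2 haarAddCircle) :
    sobENormSq (-s) (fun x => f x * g x) ≤
      4 ^ t * 4 * (∑' k, bracketSq k ^ (-(r + s - t))) * sobENormSq r f * sobENormSq (-t) g := by
  refine le_trans (ENNReal.tsum_le_tsum fun k => ?_) (tsum_bracketSq_mul_conv_sq_le ht htr hts
    (fun m => ‖fourierCoeff f m‖ₑ) (fun m => ‖fourierCoeff g m‖ₑ))
  rw [fourierCoeff_mul hf hg]
  gcongr
  exact enorm_tsum_le_tsum_enorm.trans_eq (by simp_rw [enorm_mul])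

end PeriodicFunctions

lemma ofReal_one_add_sq_rpow_mul_norm_sq (σ : ℝ) (k : ℤ) (c : ℂ) :
    ENNReal.ofReal ((1 + (k : ℝ) ^ 2) ^ σ * ‖c‖ ^ 2) = bracketSq k ^ σ * ‖c‖ₑ ^ 2 := by
  rw [ENNReal.ofReal_mul (by positivity), ENNReal.ofReal_pow (norm_nonneg _), ofReal_norm,
    bracketSq_rpow]

lemma sobFnNormSq_eq_toReal (σ : ℝ) (u : AddCircle (2 * π) → ℂ) :
    sobFnNormSq σ u = (sobENormSq σ u).toReal := by
  simp_rw [sobENormSq, ← ofReal_one_add_sq_rpow_mul_norm_sq,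
    ENNReal.tsum_toReal_eq fun _ => ENNReal.ofReal_ne_top]
  exact tsum_congr fun k => (ENNReal.toReal_ofReal (by positivity)).symm

lemma summable_sobolev_iff_sobENormSq_ne_top (σ : ℝ) (u : AddCircle (2 * π) → ℂ) :
    Summable (fun k : ℤ => (1 + (k : ℝ) ^ 2) ^ σ * ‖fourierCoeff u k‖ ^ 2) ↔
      sobENormSq σ u ≠ ⊤ := by
  simp_rw [sobENormSq, ← ofReal_one_add_sq_rpow_mul_norm_sq]
  exact ⟨Summable.tsum_ofReal_ne_top, fun h =>
    (ENNReal.summable_toReal h).congr fun k => ENNReal.toReal_ofReal (by positivity)⟩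

lemma sobENormSq_neg_ne_top {t : ℝ} (ht : 0 ≤ t) {g : AddCircle (2 * π) → ℂ}
    (hg : MemLp g 2 haarAddCircle) : sobENormSq (-t) g ≠ ⊤ := by
  refine (summable_sobolev_iff_sobENormSq_ne_top _ _).1 <|
    (summable_sq_norm_fourierCoeff hg).of_nonneg_of_le (fun k => by positivity)
      fun k => mul_le_of_le_one_left (by positivity) ?_
  exact Real.rpow_le_one_of_one_le_of_nonpos (by nlinarith) (by linarith)

lemma sqrt_toReal_le_of_le_mul {x K a b : ℝ≥0∞} (h : x ≤ K * a * b) (hK : K ≠ ⊤)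
    (ha : a ≠ ⊤) (hb : b ≠ ⊤) : √x.toReal ≤ √K.toReal * √a.toReal * √b.toReal := by
  rw [← Real.sqrt_mul ENNReal.toReal_nonneg, ← Real.sqrt_mul (by positivity),
    ← ENNReal.toReal_mul, ← ENNReal.toReal_mul]
  exact Real.sqrt_le_sqrt (ENNReal.toReal_mono (by finiteness) h)

theorem stmt_1_general (r s t : ℝ) (ht : 0 ≤ t)
    (hmin : t < min r s) (hsum : 1 / 2 + t < r + s) :
    ∃ C > 0, ∀ f g : AddCircle (2 * π) → ℂ,
      MemLp f 2 haarAddCircle →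
      Summable (fun k : ℤ => (1 + (k : ℝ) ^ 2) ^ r * ‖fourierCoeff f k‖ ^ 2) →
      MemLp g 2 haarAddCircle →
      Summable (fun k : ℤ =>
        (1 + (k : ℝ) ^ 2) ^ (-s) * ‖fourierCoeff (fun x => f x * g x) k‖ ^ 2) ∧
      Real.sqrt (sobFnNormSq (-s) (fun x => f x * g x)) ≤
        C * Real.sqrt (sobFnNormSq r f) * Real.sqrt (sobFnNormSq (-t) g) := by
  obtain ⟨htr, hts⟩ := lt_min_iff.1 hmin
  set K : ℝ≥0∞ := 4 ^ t * 4 * ∑' k, bracketSq k ^ (-(r + s - t))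
  have hK : K ≠ ⊤ := by
    have := tsum_bracketSq_rpow_neg_ne_top (σ := r + s - t) (by linarith)
    finiteness
  have hK₀ : K ≠ 0 := by
    simp [K, ENNReal.tsum_eq_zero, ENNReal.rpow_eq_zero_iff, bracketSq_ne_zero, bracketSq_ne_top]
  refine ⟨√K.toReal, Real.sqrt_pos.2 (ENNReal.toReal_pos hK₀ hK), fun f g hf hsf hg => ?_⟩
  have hfg := sobENormSq_mul_le ht htr.le hts.le hf hg
  have hf' := (summable_sobolev_iff_sobENormSq_ne_top r f).1 hsf
  have hg' := sobENormSq_neg_ne_top ht hg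
  refine ⟨(summable_sobolev_iff_sobENormSq_ne_top _ _).2
    (ne_top_of_le_ne_top (by finiteness) hfg), ?_⟩
  simp only [sobFnNormSq_eq_toReal]
  exact sqrt_toReal_le_of_le_mul hfg hK hf' hg'

/-- Dual Sobolev product estimate `‖fg‖_{-s} ≲ ‖f‖_r ‖g‖_{-t}`. -/
theorem stmt_1 (r s t : ℝ) (hr : 0 ≤ r) (hs : 0 ≤ s) (ht : 0 ≤ t)
    (hmin : t < min r s) (hsum : 1 / 2 + t < r + s) :
    ∃ C > 0, ∀ f g : AddCircle (2 * π) → ℂ,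
      MemLp f 2 haarAddCircle →
      Summable (fun k : ℤ => (1 + (k : ℝ) ^ 2) ^ r * ‖fourierCoeff f k‖ ^ 2) →
      MemLp g 2 haarAddCircle →
      Summable (fun k : ℤ =>
        (1 + (k : ℝ) ^ 2) ^ (-s) * ‖fourierCoeff (fun x => f x * g x) k‖ ^ 2) ∧
      Real.sqrt (sobFnNormSq (-s) (fun x => f x * g x)) ≤
        C * Real.sqrt (sobFnNormSq r f) * Real.sqrt (sobFnNormSq (-t) g) :=
  stmt_1_general r s t ht hmin hsum
end

section
/- Let ν > 0, let α, β ∈ ℝ with β ≤ α, and let T > 0. Then there exists C > 0 such that for all t ∈ (0,T], all ε ∈ (0,1], and all u ∈ H^β, one has ‖S_ε(t)u‖_α ≤ C t^{−(α−β)/2} ‖u‖_β, with C independent of ε. -/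
open scoped BigOperators ENNReal

/-- The squared Sobolev norm `‖u‖_σ² = Σ_{k∈ℤ} (1+k²)^σ |u_k|²` on Fourier coefficients. -/
noncomputable def sobNormSq (σ : ℝ) (a : ℤ → ℂ) : ℝ :=
  ∑' k : ℤ, (1 + (k : ℝ) ^ 2) ^ σ * ‖a k‖ ^ 2

/-- The Fourier symbol `e^{-t(1+νk²f(ε|k|))}` of the approximating semigroup `S_ε(t)`,
with the convention `e^{-∞} = 0`. -/
noncomputable def approxSymb (ν : ℝ) (f : ℝ → ℝ≥0∞) (ε t : ℝ) (k : ℤ) : ℝ :=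
  if f (ε * |(k : ℝ)|) = ⊤ then 0
  else Real.exp (-t * (1 + ν * (k : ℝ) ^ 2 * (f (ε * |(k : ℝ)|)).toReal))

set_option maxHeartbeats 800000 in
/-- Uniform (in `ε`) smoothing estimate `‖S_ε(t)u‖_α ≤ C t^{-(α-β)/2} ‖u‖_β`. -/
theorem stmt_6 (ν : ℝ) (hν : 0 < ν) (α β : ℝ) (hβ : β ≤ α) (T : ℝ) (hT : 0 < T)
    (f : ℝ → ℝ≥0∞) (hf0 : f 0 = 1)
    (c δ : ℝ) (hc : 0 < c) (hδ : 0 < δ)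
    (hfsmooth : ∀ x ∈ Set.Icc (0 : ℝ) δ, f x ≠ ⊤ ∧ |(f x).toReal - 1| ≤ c * x ^ 2)
    (q : ℝ) (hq0 : 0 < q) (hq1 : q ≤ 1) (hfq : ∀ x > (0 : ℝ), ENNReal.ofReal q ≤ f x) :
    ∃ C > 0, ∀ t ∈ Set.Ioc (0 : ℝ) T, ∀ ε ∈ Set.Ioc (0 : ℝ) 1, ∀ u : ℤ → ℂ,
      Summable (fun k : ℤ => (1 + (k : ℝ) ^ 2) ^ β * ‖u k‖ ^ 2) →
      Summable (fun k : ℤ =>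
        (1 + (k : ℝ) ^ 2) ^ α * ‖((approxSymb ν f ε t k : ℝ) : ℂ) * u k‖ ^ 2) ∧
      Real.sqrt (sobNormSq α (fun k => ((approxSymb ν f ε t k : ℝ) : ℂ) * u k)) ≤
        C * t ^ (-(α - β) / 2) * Real.sqrt (sobNormSq β u) := by
  set γ : ℝ := α - β with hγdef
  have hγ : 0 ≤ γ := sub_nonneg.2 hβ
  set a : ℝ := min 1 (ν * q) with ha_def
  have ha : 0 < a := lt_min one_pos (mul_pos hν hq0)
  obtain ⟨n, hγn⟩ : ∃ n : ℕ, γ ≤ (n : ℝ) := ⟨⌈γ⌉₊, Nat.le_ceil γ⟩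
  set K : ℝ := (n.factorial : ℝ) / (2 * a) ^ n + 1 with hK_def
  have hKpos : 0 < K := by positivity
  refine ⟨Real.sqrt K, Real.sqrt_pos.2 hKpos, ?_⟩
  rintro t ⟨ht0, htT⟩ ε ⟨hε0, hε1⟩ u hu
  have htγ : (0 : ℝ) < t ^ (-γ) := Real.rpow_pos_of_pos ht0 _
  -- pointwise key bound
  have key : ∀ k : ℤ, (1 + (k : ℝ) ^ 2) ^ α * ‖((approxSymb ν f ε t k : ℝ) : ℂ) * u k‖ ^ 2
      ≤ (K * t ^ (-γ)) * ((1 + (k : ℝ) ^ 2) ^ β * ‖u k‖ ^ 2) := by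
    intro k
    set m : ℝ := 1 + (k : ℝ) ^ 2 with hm_def
    have hm1 : (1 : ℝ) ≤ m := by nlinarith [sq_nonneg ((k : ℝ))]
    have hm0 : (0 : ℝ) < m := by positivity
    set y : ℝ := t * m with hy_def
    have hy : (0 : ℝ) < y := mul_pos ht0 hm0
    set s : ℝ := approxSymb ν f ε t k with hs_def
    have hnorm : ‖((s : ℝ) : ℂ) * u k‖ ^ 2 = s ^ 2 * ‖u k‖ ^ 2 := by
      rw [norm_mul, Complex.norm_real, Real.norm_eq_abs, mul_pow, sq_abs]
    have hs_le : s ^ 2 ≤ Real.exp (-(2 * a * y)) := by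
      rw [hs_def, approxSymb]
      split_ifs with htop
      · simpa using (Real.exp_pos _).le
      · set F : ℝ := (f (ε * |(k : ℝ)|)).toReal with hF_def
        have hFq : q ≤ F := by
          rcases eq_or_ne k 0 with hk | hk
          · simp only [hF_def, hk, Int.cast_zero, abs_zero, mul_zero, hf0,
              ENNReal.toReal_one]
            exact hq1
          · have hx : 0 < ε * |(k : ℝ)| := by
              have hk' : (0 : ℝ) < |(k : ℝ)| := abs_pos.2 (by exact_mod_cast hk)
              positivity
            exact (ENNReal.ofReal_le_iff_le_toReal htop).1 (hfq _ hx)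
        have harg : a * m ≤ 1 + ν * (k : ℝ) ^ 2 * F := by
          have h1 : a ≤ 1 := min_le_left _ _
          have h2 : a ≤ ν * q := min_le_right _ _
          have h3 : a * (k : ℝ) ^ 2 ≤ ν * (k : ℝ) ^ 2 * q := by
            nlinarith [sq_nonneg ((k : ℝ))]
          have h4 : ν * (k : ℝ) ^ 2 * q ≤ ν * (k : ℝ) ^ 2 * F :=
            mul_le_mul_of_nonneg_left hFq (by positivity)
          have h5 : a * m = a + a * (k : ℝ) ^ 2 := by simp only [hm_def]; ring
          linarith
        have hsq : Real.exp (-t * (1 + ν * (k : ℝ) ^ 2 * F)) ^ 2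
            = Real.exp (-(2 * t * (1 + ν * (k : ℝ) ^ 2 * F))) := by
          rw [sq, ← Real.exp_add]; ring_nf
        rw [hsq, Real.exp_le_exp]
        have h6 : t * (a * m) ≤ t * (1 + ν * (k : ℝ) ^ 2 * F) :=
          mul_le_mul_of_nonneg_left harg ht0.le
        simp only [hy_def]
        linarith
    have hexp1 : Real.exp (-(2 * a * y)) ≤ 1 := Real.exp_le_one_iff.2 (by nlinarith)
    have h1 : y ^ γ ≤ y ^ n + 1 := by
      rcases le_total y 1 with h | h
      · have := Real.rpow_le_one hy.le h hγ
        nlinarith [pow_nonneg hy.le n]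
      · calc y ^ γ ≤ y ^ (n : ℝ) := Real.rpow_le_rpow_of_exponent_le h hγn
          _ = y ^ n := Real.rpow_natCast y n
          _ ≤ y ^ n + 1 := by linarith
    have hax : (0 : ℝ) < (2 * a) ^ n := by positivity
    have h2 : y ^ n * Real.exp (-(2 * a * y)) ≤ (n.factorial : ℝ) / (2 * a) ^ n := by
      have hE := Real.pow_div_factorial_le_exp (x := 2 * a * y) (by positivity) n
      have hfac : (0 : ℝ) < (n.factorial : ℝ) := by exact_mod_cast n.factorial_pos
      have hyn : y ^ n ≤ (n.factorial : ℝ) / (2 * a) ^ n * Real.exp (2 * a * y) := by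
        rw [div_mul_eq_mul_div, le_div_iff₀ hax]
        calc y ^ n * (2 * a) ^ n = (2 * a * y) ^ n := by rw [← mul_pow, mul_comm y]
          _ ≤ (n.factorial : ℝ) * Real.exp (2 * a * y) := by
              rw [div_le_iff₀ hfac] at hE; linarith
      calc y ^ n * Real.exp (-(2 * a * y))
          ≤ ((n.factorial : ℝ) / (2 * a) ^ n * Real.exp (2 * a * y)) * Real.exp (-(2 * a * y)) :=
            mul_le_mul_of_nonneg_right hyn (Real.exp_pos _).le
        _ = (n.factorial : ℝ) / (2 * a) ^ n := by
            rw [mul_assoc, ← Real.exp_add]; simp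
    have hmain : y ^ γ * Real.exp (-(2 * a * y)) ≤ K := by
      calc y ^ γ * Real.exp (-(2 * a * y)) ≤ (y ^ n + 1) * Real.exp (-(2 * a * y)) :=
            mul_le_mul_of_nonneg_right h1 (Real.exp_pos _).le
        _ = y ^ n * Real.exp (-(2 * a * y)) + Real.exp (-(2 * a * y)) := by ring
        _ ≤ (n.factorial : ℝ) / (2 * a) ^ n + 1 := add_le_add h2 hexp1
    have hyγ : m ^ γ = y ^ γ * t ^ (-γ) := by
      rw [hy_def, Real.mul_rpow ht0.le hm0.le, Real.rpow_neg ht0.le, mul_comm (t ^ γ),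
        mul_assoc, mul_inv_cancel₀ (Real.rpow_pos_of_pos ht0 γ).ne', mul_one]
    have hcore : m ^ γ * s ^ 2 ≤ K * t ^ (-γ) := by
      have hys : y ^ γ * s ^ 2 ≤ K :=
        le_trans (mul_le_mul_of_nonneg_left hs_le (Real.rpow_nonneg hy.le _)) hmain
      calc m ^ γ * s ^ 2 = (y ^ γ * s ^ 2) * t ^ (-γ) := by rw [hyγ]; ring
        _ ≤ K * t ^ (-γ) := mul_le_mul_of_nonneg_right hys htγ.le
    have hmα : m ^ α = m ^ β * m ^ γ := by
      rw [← Real.rpow_add hm0]; congr 1; simp [hγdef]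
    calc m ^ α * ‖((s : ℝ) : ℂ) * u k‖ ^ 2
        = (m ^ β * ‖u k‖ ^ 2) * (m ^ γ * s ^ 2) := by rw [hnorm, hmα]; ring
      _ ≤ (m ^ β * ‖u k‖ ^ 2) * (K * t ^ (-γ)) :=
          mul_le_mul_of_nonneg_left hcore
            (mul_nonneg (Real.rpow_nonneg hm0.le β) (sq_nonneg _))
      _ = (K * t ^ (-γ)) * (m ^ β * ‖u k‖ ^ 2) := by ring
  have hsum2 : Summable fun k : ℤ => (K * t ^ (-γ)) * ((1 + (k : ℝ) ^ 2) ^ β * ‖u k‖ ^ 2) :=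
    hu.mul_left _
  have hsum1 : Summable (fun k : ℤ =>
      (1 + (k : ℝ) ^ 2) ^ α * ‖((approxSymb ν f ε t k : ℝ) : ℂ) * u k‖ ^ 2) :=
    Summable.of_nonneg_of_le (fun k => by positivity) key hsum2
  refine ⟨hsum1, ?_⟩
  have htsum : sobNormSq α (fun k => ((approxSymb ν f ε t k : ℝ) : ℂ) * u k)
      ≤ (K * t ^ (-γ)) * sobNormSq β u := by
    rw [sobNormSq, sobNormSq, ← tsum_mul_left]
    exact Summable.tsum_le_tsum key hsum1 hsum2
  calc Real.sqrt (sobNormSq α (fun k => ((approxSymb ν f ε t k : ℝ) : ℂ) * u k))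
      ≤ Real.sqrt ((K * t ^ (-γ)) * sobNormSq β u) := Real.sqrt_le_sqrt htsum
    _ = Real.sqrt K * t ^ (-(α - β) / 2) * Real.sqrt (sobNormSq β u) := by
        rw [Real.sqrt_mul (by positivity), Real.sqrt_mul hKpos.le]
        congr 2
        rw [Real.sqrt_eq_rpow, ← Real.rpow_mul ht0.le]
        congr 1
        ring
end

section
/- Let β ∈ ℝ and α ∈ [0,1]. Then there exists C > 0 such that for all ε ∈ (0,1] and all u ∈ H^β, one has ‖D_ε u‖_{β−α} ≤ C ε^{α−1} ‖u‖_β. -/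
open MeasureTheory
open scoped BigOperators

/-- The Fourier transform `μ̂(ξ) = ∫ e^{iξy} μ(dy)` of the signed measure `μ = μp - μn`. -/
noncomputable def muHat (μp μn : Measure ℝ) (ξ : ℝ) : ℂ :=
  (∫ y, Complex.exp (Complex.I * ξ * y) ∂μp) - ∫ y, Complex.exp (Complex.I * ξ * y) ∂μn

/-!
`μ̂` is bounded by the total mass `M` of `|μ|`, and since `μ(ℝ) = 0` also
`|μ̂(ξ)| = |∫ (e^{iξy} - 1) μ(dy)| ≤ L |ξ|` with `L` the first absolute moment. So the multiplier
`ε⁻¹ μ̂(εk)` is bounded both by `L |k|` and by `M / ε`; interpolating the two bounds with weights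
`α`, `1 - α` gives `|ε⁻¹ μ̂(εk)| ≤ L^α M^{1-α} ε^{α-1} (1 + k²)^{α/2}`, and a Fourier multiplier
of growth `(1 + k²)^{α/2}` maps `H^β` to `H^{β-α}` with the same constant.
-/

open MeasureTheory

lemma norm_exp_I_mul_mul (ξ y : ℝ) : ‖Complex.exp (Complex.I * ξ * y)‖ = 1 := by
  rw [mul_assoc, ← Complex.ofReal_mul, Complex.norm_exp_I_mul_ofReal]

lemma MeasureTheory.Integrable.abs_of_abs_pow {μ : Measure ℝ} [IsFiniteMeasure μ] {n : ℕ}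
    (hn : 1 ≤ n) (h : Integrable (fun y : ℝ => |y| ^ n) μ) : Integrable (fun y : ℝ => |y|) μ := by
  refine ((integrable_const 1).add h).mono' continuous_abs.aestronglyMeasurable
    (ae_of_all _ fun y => ?_)
  rw [Real.norm_eq_abs, abs_abs, Pi.add_apply]
  rcases le_total |y| 1 with hy | hy
  · linarith [pow_nonneg (abs_nonneg y) n]
  · linarith [le_self_pow₀ hy (by omega : n ≠ 0)]

lemma norm_integral_exp_I_mul_sub_one_le {μ : Measure ℝ} (hμ : Integrable (fun y : ℝ => |y|) μ)
    (ξ : ℝ) :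
    ‖∫ y, (Complex.exp (Complex.I * ξ * y) - 1) ∂μ‖ ≤ (∫ y, |y| ∂μ) * |ξ| := by
  rw [← integral_mul_const]
  refine norm_integral_le_of_norm_le (hμ.mul_const _) (ae_of_all _ fun y => ?_)
  calc ‖Complex.exp (Complex.I * ξ * y) - 1‖ = ‖Complex.exp (Complex.I * ↑(ξ * y)) - 1‖ := by
        rw [Complex.ofReal_mul, mul_assoc]
    _ ≤ ‖ξ * y‖ := Real.norm_exp_I_mul_ofReal_sub_one_le
    _ = |y| * |ξ| := by rw [Real.norm_eq_abs, abs_mul, mul_comm]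

section FourierTransform

variable (μ : Measure ℝ) [IsFiniteMeasure μ]

lemma integrable_exp_I_mul (ξ : ℝ) :
    Integrable (fun y : ℝ => Complex.exp (Complex.I * ξ * y)) μ :=
  .of_bound (by fun_prop) 1 (ae_of_all _ fun y => (norm_exp_I_mul_mul ξ y).le)

lemma norm_integral_exp_I_mul_le (ξ : ℝ) :
    ‖∫ y, Complex.exp (Complex.I * ξ * y) ∂μ‖ ≤ μ.real Set.univ := by
  simpa using norm_integral_le_of_norm_le_const (ae_of_all μ fun y => (norm_exp_I_mul_mul ξ y).le)

lemma integral_exp_I_mul_eq (ξ : ℝ) :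
    ∫ y, Complex.exp (Complex.I * ξ * y) ∂μ
      = (∫ y, (Complex.exp (Complex.I * ξ * y) - 1) ∂μ) + (μ.real Set.univ : ℂ) := by
  rw [integral_sub (integrable_exp_I_mul μ ξ) (integrable_const 1), integral_const]
  simp

end FourierTransform

section MuHat

variable {μp μn : Measure ℝ} [IsFiniteMeasure μp] [IsFiniteMeasure μn]

lemma norm_muHat_le (ξ : ℝ) : ‖muHat μp μn ξ‖ ≤ μp.real Set.univ + μn.real Set.univ :=
  (norm_sub_le _ _).trans
    (add_le_add (norm_integral_exp_I_mul_le μp ξ) (norm_integral_exp_I_mul_le μn ξ))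

lemma norm_muHat_le_mul_abs (hzero : μp Set.univ = μn Set.univ)
    (hp : Integrable (fun y : ℝ => |y|) μp) (hn : Integrable (fun y : ℝ => |y|) μn) (ξ : ℝ) :
    ‖muHat μp μn ξ‖ ≤ ((∫ y, |y| ∂μp) + ∫ y, |y| ∂μn) * |ξ| := by
  have hreal : μp.real Set.univ = μn.real Set.univ := by simp [Measure.real, hzero]
  rw [muHat, integral_exp_I_mul_eq μp, integral_exp_I_mul_eq μn, hreal, add_sub_add_right_eq_sub,
    add_mul]
  exact (norm_sub_le _ _).trans (add_le_add (norm_integral_exp_I_mul_sub_one_le hp ξ)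
    (norm_integral_exp_I_mul_sub_one_le hn ξ))

end MuHat

lemma le_rpow_mul_rpow_of_le_of_le {r a b α : ℝ} (hr : 0 ≤ r) (hα : α ∈ Set.Icc (0 : ℝ) 1)
    (ha : r ≤ a) (hb : r ≤ b) : r ≤ a ^ α * b ^ (1 - α) :=
  calc r = r ^ α * r ^ (1 - α) := by
        rw [← Real.rpow_add' hr (by norm_num), add_sub_cancel, Real.rpow_one]
    _ ≤ a ^ α * b ^ (1 - α) :=
        mul_le_mul (Real.rpow_le_rpow hr ha hα.1) (Real.rpow_le_rpow hr hb (sub_nonneg.2 hα.2))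
          (Real.rpow_nonneg hr _) (Real.rpow_nonneg (hr.trans ha) _)

lemma norm_inv_mul_apply_mul_le {m : ℝ → ℂ} {L M α ε : ℝ} (hL : ∀ ξ, ‖m ξ‖ ≤ L * |ξ|)
    (hM : ∀ ξ, ‖m ξ‖ ≤ M) (hα : α ∈ Set.Icc (0 : ℝ) 1) (hε : 0 < ε) (k : ℝ) :
    ‖((ε⁻¹ : ℝ) : ℂ) * m (ε * k)‖
      ≤ L ^ α * M ^ (1 - α) * ε ^ (α - 1) * (1 + k ^ 2) ^ (α / 2) := by
  have hL0 : 0 ≤ L := by simpa using (norm_nonneg _).trans (hL 1)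
  have hw : 0 ≤ 1 + k ^ 2 := by positivity
  rw [norm_mul, Complex.norm_real, Real.norm_of_nonneg (inv_nonneg.2 hε.le)]
  have hlin : ε⁻¹ * ‖m (ε * k)‖ ≤ L * (1 + k ^ 2) ^ (1 / 2 : ℝ) := by
    rw [← Real.sqrt_eq_rpow, inv_mul_le_iff₀ hε]
    calc ‖m (ε * k)‖ ≤ L * (ε * |k|) := by simpa [abs_mul, abs_of_pos hε] using hL (ε * k)
      _ ≤ ε * (L * √(1 + k ^ 2)) := by
        rw [mul_left_comm]
        gcongr
        exact Real.abs_le_sqrt (by linarith)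
  have hconst : ε⁻¹ * ‖m (ε * k)‖ ≤ M * ε⁻¹ := by
    rw [mul_comm]; gcongr; exact hM _
  refine (le_rpow_mul_rpow_of_le_of_le (by positivity) hα hlin hconst).trans_eq ?_
  rw [Real.mul_rpow hL0 (by positivity), Real.mul_rpow ((norm_nonneg _).trans (hM 0))
    (by positivity), ← Real.rpow_mul hw, Real.inv_rpow hε.le, ← Real.rpow_neg hε.le, neg_sub]
  ring_nf

lemma rpow_sub_mul_norm_mul_sq_le {w A s β : ℝ} (hw : 0 < w) {a b : ℂ}
    (ha : ‖a‖ ≤ A * w ^ (s / 2)) : w ^ (β - s) * ‖a * b‖ ^ 2 ≤ A ^ 2 * (w ^ β * ‖b‖ ^ 2) := by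
  have ha2 : ‖a‖ ^ 2 ≤ A ^ 2 * w ^ s := by
    calc ‖a‖ ^ 2 ≤ (A * w ^ (s / 2)) ^ 2 := pow_le_pow_left₀ (norm_nonneg _) ha 2
      _ = A ^ 2 * w ^ s := by
        rw [mul_pow, ← Real.rpow_mul_natCast hw.le]
        norm_num
  calc w ^ (β - s) * ‖a * b‖ ^ 2 = w ^ (β - s) * (‖a‖ ^ 2 * ‖b‖ ^ 2) := by rw [norm_mul, mul_pow]
    _ ≤ w ^ (β - s) * ((A ^ 2 * w ^ s) * ‖b‖ ^ 2) := by gcongr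
    _ = A ^ 2 * ((w ^ (β - s) * w ^ s) * ‖b‖ ^ 2) := by ring
    _ = A ^ 2 * (w ^ β * ‖b‖ ^ 2) := by rw [← Real.rpow_add hw, sub_add_cancel]

lemma summable_sobolev_and_sqrt_sobNormSq_mul_le {β s A : ℝ} {m u : ℤ → ℂ}
    (hm : ∀ k : ℤ, ‖m k‖ ≤ A * (1 + (k : ℝ) ^ 2) ^ (s / 2))
    (hu : Summable (fun k : ℤ => (1 + (k : ℝ) ^ 2) ^ β * ‖u k‖ ^ 2)) :
    Summable (fun k : ℤ => (1 + (k : ℝ) ^ 2) ^ (β - s) * ‖m k * u k‖ ^ 2) ∧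
      √(sobNormSq (β - s) (fun k => m k * u k)) ≤ A * √(sobNormSq β u) := by
  have hA : 0 ≤ A := by simpa using (norm_nonneg _).trans (hm 0)
  have hterm (k : ℤ) := rpow_sub_mul_norm_mul_sq_le (β := β) (b := u k) (by positivity) (hm k)
  have hsum := Summable.of_nonneg_of_le (fun k => by positivity) hterm (hu.mul_left (A ^ 2))
  refine ⟨hsum, ?_⟩
  have hle : sobNormSq (β - s) (fun k => m k * u k) ≤ A ^ 2 * sobNormSq β u := by
    rw [sobNormSq, sobNormSq, ← tsum_mul_left]
    exact hsum.tsum_le_tsum hterm (hu.mul_left _)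
  calc √(sobNormSq (β - s) (fun k => m k * u k)) ≤ √(A ^ 2 * sobNormSq β u) := Real.sqrt_le_sqrt hle
    _ = A * √(sobNormSq β u) := by rw [Real.sqrt_mul (sq_nonneg A), Real.sqrt_sq hA]

theorem stmt_7_general (β α : ℝ) (hα : α ∈ Set.Icc (0 : ℝ) 1)
    (μp μn : Measure ℝ) [IsFiniteMeasure μp] [IsFiniteMeasure μn]
    (hzero : μp Set.univ = μn Set.univ)
    (hmom : Integrable (fun y : ℝ => |y| ^ 4) (μp + μn)) :
    ∃ C > 0, ∀ ε ∈ Set.Ioc (0 : ℝ) 1, ∀ u : ℤ → ℂ,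
      Summable (fun k : ℤ => (1 + (k : ℝ) ^ 2) ^ β * ‖u k‖ ^ 2) →
      Summable (fun k : ℤ => (1 + (k : ℝ) ^ 2) ^ (β - α) *
        ‖((ε⁻¹ : ℝ) : ℂ) * muHat μp μn (ε * k) * u k‖ ^ 2) ∧
      Real.sqrt (sobNormSq (β - α) (fun k => ((ε⁻¹ : ℝ) : ℂ) * muHat μp μn (ε * k) * u k)) ≤
        C * ε ^ (α - 1) * Real.sqrt (sobNormSq β u) := by
  have hp := (hmom.mono_measure (Measure.le_add_right le_rfl)).abs_of_abs_pow (by norm_num)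
  have hn := (hmom.mono_measure (Measure.le_add_left le_rfl)).abs_of_abs_pow (by norm_num)
  -- the `+ 1`s keep the constant `L ^ α * M ^ (1 - α)` positive
  set L := (∫ y, |y| ∂μp) + (∫ y, |y| ∂μn) + 1
  set M := μp.real Set.univ + μn.real Set.univ + 1
  have hL (ξ : ℝ) : ‖muHat μp μn ξ‖ ≤ L * |ξ| :=
    (norm_muHat_le_mul_abs hzero hp hn ξ).trans (by gcongr; linarith)
  have hM (ξ : ℝ) : ‖muHat μp μn ξ‖ ≤ M := (norm_muHat_le ξ).trans (by linarith)
  refine ⟨L ^ α * M ^ (1 - α), by positivity, fun ε hε u hu => ?_⟩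
  exact summable_sobolev_and_sqrt_sobNormSq_mul_le
    (fun k => norm_inv_mul_apply_mul_le hL hM hα hε.1 k) hu

/-- `‖D_ε u‖_{β-α} ≤ C ε^{α-1} ‖u‖_β`, where `D_ε` acts as the Fourier multiplier
`ε^{-1} μ̂(εk)` and `μ = μp - μn` is a signed measure with `μ(ℝ) = 0`, `∫ x μ(dx) = 1`
and finite fourth moment. -/
theorem stmt_7 (β α : ℝ) (hα : α ∈ Set.Icc (0 : ℝ) 1)
    (μp μn : Measure ℝ) [IsFiniteMeasure μp] [IsFiniteMeasure μn]
    (hzero : μp Set.univ = μn Set.univ)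
    (hmean : (∫ y, y ∂μp) - ∫ y, y ∂μn = 1)
    (hmom : Integrable (fun y : ℝ => |y| ^ 4) (μp + μn)) :
    ∃ C > 0, ∀ ε ∈ Set.Ioc (0 : ℝ) 1, ∀ u : ℤ → ℂ,
      Summable (fun k : ℤ => (1 + (k : ℝ) ^ 2) ^ β * ‖u k‖ ^ 2) →
      Summable (fun k : ℤ => (1 + (k : ℝ) ^ 2) ^ (β - α) *
        ‖((ε⁻¹ : ℝ) : ℂ) * muHat μp μn (ε * k) * u k‖ ^ 2) ∧
      Real.sqrt (sobNormSq (β - α) (fun k => ((ε⁻¹ : ℝ) : ℂ) * muHat μp μn (ε * k) * u k)) ≤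
        C * ε ^ (α - 1) * Real.sqrt (sobNormSq β u) :=
  stmt_7_general β α hα μp μn hzero hmom
end

section
/- Let E be a separable Banach space, n ≥ 1, and let (φ(t))_{t ∈ [0,1]^n} be an E-valued random field with almost surely continuous sample paths. Suppose that for every q ∈ (2,∞) there exists K_q > 0 such that (E‖φ(t)‖^q)^{1/q} ≤ K_q (E‖φ(t)‖²)^{1/2} and (E‖φ(s) − φ(t)‖^q)^{1/q} ≤ K_q (E‖φ(s) − φ(t)‖²)^{1/2} for all s, t ∈ [0,1]^n, and suppose that E‖φ(s) − φ(t)‖² ≤ K₀ |s−t|^δ for some K₀, δ > 0 and all s, t ∈ [0,1]^n. Then for every p > 0 there exists a constant C > 0 (depending on p, n, δ and the constants K_q, but not on K₀ or φ otherwise) such that E sup_{t ∈ [0,1]^n} ‖φ(t)‖^p ≤ C (K₀ + E‖φ(0)‖²)^{p/2}. -/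
/-!
Dyadic chaining. Let `S m` be the largest increment of `φ` between a point of the level-`m`
dyadic grid of `[0,1]ⁿ` and its parent at level `m - 1` (the parent of a level-`0` point is `0`).
Walking from `0` through the dyadic approximations of `t` and using continuity,
`‖φ t‖ ≤ ‖φ 0‖ + ∑ₘ S m`. A maximum of `N` random variables has `L^q` norm at most `N^{1/q}`
times their largest `L^q` norm; the level-`m` grid has about `2^{mn}` points and its increments
span distances `≲ 2^{-m}`, so the moment comparison and the Hölder bound on second moments give
`‖S m‖_q ≲ 2^{m(n/q - δ/2)} √K₀`. For `q > 2n/δ` this is a geometric series, and `p ≤ q` is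
reached by monotonicity of `L^p` norms on a probability space.
-/

open MeasureTheory
open scoped ENNReal

/-- The Euclidean distance on the parameter box `[0,1]ⁿ`. -/
noncomputable def eudist {n : ℕ} (s t : Fin n → ℝ) : ℝ :=
  Real.sqrt (∑ i, (s i - t i) ^ 2)

open Filter Set Topology

lemma eudist_le_sqrt_mul_dist {n : ℕ} (s t : Fin n → ℝ) : eudist s t ≤ √n * dist s t := by
  have hsum : ∑ i, (s i - t i) ^ 2 ≤ n * dist s t ^ 2 := by
    calc ∑ i, (s i - t i) ^ 2 ≤ ∑ _i : Fin n, dist s t ^ 2 := by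
          refine Finset.sum_le_sum fun i _ => ?_
          rw [← sq_abs, ← Real.dist_eq]
          exact pow_le_pow_left₀ dist_nonneg (dist_le_pi_dist s t i) 2
      _ = n * dist s t ^ 2 := by simp
  calc eudist s t ≤ √(n * dist s t ^ 2) := Real.sqrt_le_sqrt hsum
    _ = √n * dist s t := by rw [Real.sqrt_mul n.cast_nonneg, Real.sqrt_sq dist_nonneg]

noncomputable def dyadicGrid (n m : ℕ) : Finset (Fin n → ℝ) :=
  Finset.univ.image fun k : Fin n → Fin (2 ^ m + 1) => fun i => (k i : ℝ) / 2 ^ m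

lemma card_dyadicGrid_le (n m : ℕ) : (dyadicGrid n m).card ≤ (2 ^ m + 1) ^ n :=
  Finset.card_image_le.trans (by simp)

lemma dyadicGrid_subset_Icc (n m : ℕ) : ↑(dyadicGrid n m) ⊆ Icc (0 : Fin n → ℝ) 1 := by
  intro x hx
  obtain ⟨k, -, rfl⟩ := Finset.mem_image.1 hx
  refine ⟨fun i => by positivity, fun i => ?_⟩
  have hk : (k i : ℝ) ≤ 2 ^ m := by exact_mod_cast Nat.lt_succ_iff.mp (k i).is_lt
  exact (div_le_one (by positivity)).2 hk

noncomputable def dyadicFloor {n : ℕ} (m : ℕ) (t : Fin n → ℝ) : Fin n → ℝ :=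
  fun i => ⌊t i * 2 ^ m⌋ / 2 ^ m

lemma dyadicFloor_mem_dyadicGrid {n : ℕ} (m : ℕ) {t : Fin n → ℝ}
    (ht : t ∈ Icc (0 : Fin n → ℝ) 1) : dyadicFloor m t ∈ dyadicGrid n m := by
  have hfloor_nonneg : ∀ i, 0 ≤ ⌊t i * 2 ^ m⌋ := fun i =>
    Int.floor_nonneg.2 (mul_nonneg (ht.1 i) (by positivity))
  have hfloor_le : ∀ i, ⌊t i * 2 ^ m⌋.toNat < 2 ^ m + 1 := fun i => by
    have hle : t i * 2 ^ m ≤ (2 ^ m : ℕ) := by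
      push_cast
      exact mul_le_of_le_one_left (by positivity) (ht.2 i)
    have := Int.toNat_le.2 ((Int.floor_le_floor hle).trans_eq (Int.floor_natCast _))
    omega
  refine Finset.mem_image.2 ⟨fun i => ⟨_, hfloor_le i⟩, Finset.mem_univ _, funext fun i => ?_⟩
  simp only [dyadicFloor]
  congr 1
  exact_mod_cast Int.toNat_of_nonneg (hfloor_nonneg i)

lemma dist_dyadicFloor_le {n : ℕ} (m : ℕ) (t : Fin n → ℝ) :
    dist t (dyadicFloor m t) ≤ 2⁻¹ ^ m := by
  refine (dist_pi_le_iff (by positivity)).2 fun i => ?_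
  have h2m : (0 : ℝ) < 2 ^ m := by positivity
  have hdiff : t i - dyadicFloor m t i = (t i * 2 ^ m - ⌊t i * 2 ^ m⌋) / 2 ^ m := by
    simp only [dyadicFloor]; field_simp
  rw [Real.dist_eq, hdiff, abs_div, abs_of_pos h2m, abs_of_nonneg (Int.fract_nonneg _),
    div_le_iff₀ h2m, inv_pow, inv_mul_cancel₀ h2m.ne']
  exact (Int.fract_lt_one _).le

lemma tendsto_dyadicFloor {n : ℕ} (t : Fin n → ℝ) :
    Tendsto (fun m => dyadicFloor m t) atTop (𝓝 t) := by
  refine tendsto_iff_dist_tendsto_zero.2 <| squeeze_zero (fun _ => dist_nonneg) (fun m => ?_)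
    (tendsto_pow_atTop_nhds_zero_of_lt_one (by norm_num : (0 : ℝ) ≤ 2⁻¹) (by norm_num))
  rw [dist_comm]
  exact dist_dyadicFloor_le m t

lemma dyadicFloor_dyadicFloor_succ {n : ℕ} (m : ℕ) (t : Fin n → ℝ) :
    dyadicFloor m (dyadicFloor (m + 1) t) = dyadicFloor m t := by
  funext i
  have h : ⌊(⌊t i * 2 ^ (m + 1)⌋ : ℝ) / 2 ^ (m + 1) * 2 ^ m⌋ = ⌊t i * 2 ^ m⌋ := by
    rw [show (⌊t i * 2 ^ (m + 1)⌋ : ℝ) / 2 ^ (m + 1) * 2 ^ m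
        = (⌊t i * 2 ^ (m + 1)⌋ : ℝ) / (2 : ℕ) by push_cast; field_simp; ring,
      Int.floor_div_natCast, Int.floor_intCast, ← Int.floor_div_natCast]
    congr 1
    push_cast
    ring
  simp only [dyadicFloor, h]

noncomputable def dyadicParent {n : ℕ} : ℕ → (Fin n → ℝ) → Fin n → ℝ
  | 0, _ => 0
  | m + 1, u => dyadicFloor m u

lemma dist_dyadicParent_le {n : ℕ} (m : ℕ) {u : Fin n → ℝ} (hu : u ∈ Icc (0 : Fin n → ℝ) 1) :
    dist u (dyadicParent m u) ≤ 2 * 2⁻¹ ^ m := by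
  cases m with
  | zero =>
    refine (dist_pi_le_iff (by norm_num)).2 fun i => ?_
    rw [dyadicParent, Pi.zero_apply, Real.dist_0_eq_abs, abs_of_nonneg (hu.1 i)]
    norm_num
    linarith [show u i ≤ 1 from hu.2 i]
  | succ m =>
    rw [pow_succ, mul_comm, inv_mul_cancel_right₀ two_ne_zero]
    exact dist_dyadicFloor_le m u

lemma enorm_le_enorm_add_tsum_enorm_sub {E : Type*} [NormedAddCommGroup E] {x : ℕ → E}
    {y : E} (hx : Tendsto x atTop (𝓝 y)) :
    ‖y‖ₑ ≤ ‖x 0‖ₑ + ∑' m, ‖x (m + 1) - x m‖ₑ := by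
  refine le_of_tendsto' ((continuous_enorm.tendsto y).comp hx) fun N => ?_
  calc ‖x N‖ₑ = ‖x 0 + ∑ m ∈ Finset.range N, (x (m + 1) - x m)‖ₑ := by
        rw [Finset.sum_range_sub, add_sub_cancel]
    _ ≤ ‖x 0‖ₑ + ∑ m ∈ Finset.range N, ‖x (m + 1) - x m‖ₑ := by
        refine (enorm_add_le (x 0) _).trans ?_
        gcongr
        exact enorm_sum_le _ _
    _ ≤ ‖x 0‖ₑ + ∑' m, ‖x (m + 1) - x m‖ₑ := by grw [ENNReal.sum_le_tsum]

lemma ENNReal.iSup_rpow {ι : Sort*} (f : ι → ℝ≥0∞) {r : ℝ} (hr : 0 < r) :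
    (⨆ i, f i) ^ r = ⨆ i, f i ^ r :=
  (ENNReal.orderIsoRpow r hr).map_iSup f

section Moments

variable {Ω : Type*} [MeasurableSpace Ω] {P : Measure Ω}

lemma eLpNorm'_finsetSup_enorm_le {E ι : Type*} [NormedAddCommGroup E] (s : Finset ι)
    {f : ι → Ω → E} (hf : ∀ i ∈ s, AEStronglyMeasurable (f i) P) {q : ℝ} (hq : 0 < q)
    {c : ℝ≥0∞} (hc : ∀ i ∈ s, eLpNorm' (f i) q P ≤ c) :
    eLpNorm' (fun ω => s.sup fun i => ‖f i ω‖ₑ) q P ≤ (s.card : ℝ≥0∞) ^ (1 / q) * c := by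
  have hmono : Monotone fun x : ℝ≥0∞ => x ^ q := ENNReal.monotone_rpow_of_nonneg hq.le
  have hsup_rpow (ω : Ω) : (s.sup fun i => ‖f i ω‖ₑ) ^ q ≤ ∑ i ∈ s, ‖f i ω‖ₑ ^ q :=
    s.apply_sup_le_sum (f := fun x : ℝ≥0∞ => x ^ q) (ENNReal.zero_rpow_of_pos hq)
      fun {a b} => (hmono.map_sup a b).trans_le (sup_le le_self_add le_add_self)
  have hint : ∫⁻ ω, (s.sup fun i => ‖f i ω‖ₑ) ^ q ∂P ≤ s.card * c ^ q :=
    calc ∫⁻ ω, (s.sup fun i => ‖f i ω‖ₑ) ^ q ∂P ≤ ∫⁻ ω, ∑ i ∈ s, ‖f i ω‖ₑ ^ q ∂P :=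
          lintegral_mono hsup_rpow
      _ = ∑ i ∈ s, eLpNorm' (f i) q P ^ q := by
          rw [lintegral_finsetSum' s fun i hi => (hf i hi).enorm.pow_const q]
          exact Finset.sum_congr rfl fun i _ => lintegral_rpow_enorm_eq_rpow_eLpNorm' hq
      _ ≤ ∑ _i ∈ s, c ^ q := Finset.sum_le_sum fun i hi => by gcongr; exact hc i hi
      _ = s.card * c ^ q := by rw [Finset.sum_const, nsmul_eq_mul]
  calc eLpNorm' (fun ω => s.sup fun i => ‖f i ω‖ₑ) q P ≤ (s.card * c ^ q) ^ (1 / q) :=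
        ENNReal.rpow_le_rpow hint (by positivity)
    _ = (s.card : ℝ≥0∞) ^ (1 / q) * c := by
        rw [ENNReal.mul_rpow_of_nonneg _ _ (by positivity), ← ENNReal.rpow_mul,
          mul_one_div_cancel hq.ne', ENNReal.rpow_one]

lemma eLpNorm'_tsum_le {f : ℕ → Ω → ℝ≥0∞} (hf : ∀ i, AEMeasurable (f i) P) {q : ℝ}
    (hq : 1 ≤ q) : eLpNorm' (fun ω => ∑' i, f i ω) q P ≤ ∑' i, eLpNorm' (f i) q P := by
  have hq0 : 0 < q := one_pos.trans_le hq
  let partialSum (N : ℕ) : Ω → ℝ≥0∞ := ∑ i ∈ Finset.range N, f i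
  have hpartial_mono : Monotone partialSum := fun M N hMN ω => by
    simpa only [partialSum, Finset.sum_apply] using
      Finset.sum_le_sum_of_subset (Finset.range_subset_range.2 hMN)
  have htsum (ω : Ω) : ∑' i, f i ω = ⨆ N, partialSum N ω := by
    simp only [partialSum, Finset.sum_apply, ENNReal.tsum_eq_iSup_nat]
  have hlim : eLpNorm' (fun ω => ∑' i, f i ω) q P = ⨆ N, eLpNorm' (partialSum N) q P := by
    simp only [eLpNorm'_eq_lintegral_enorm, enorm_eq_self, htsum, ENNReal.iSup_rpow _ hq0]
    rw [lintegral_iSup' (fun N => (Finset.aemeasurable_sum _ fun i _ => hf i).pow_const q)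
      (ae_of_all _ fun ω M N hMN => ENNReal.rpow_le_rpow (hpartial_mono hMN ω) hq0.le),
      ENNReal.iSup_rpow _ (by positivity)]
  rw [hlim]
  refine iSup_le fun N => ?_
  calc eLpNorm' (partialSum N) q P ≤ ∑ i ∈ Finset.range N, eLpNorm' (f i) q P :=
        eLpNorm'_sum_le (fun i _ => (hf i).aestronglyMeasurable) hq
    _ ≤ ∑' i, eLpNorm' (f i) q P := ENNReal.sum_le_tsum _

end Moments

noncomputable def dyadicChainingConst (n : ℕ) (q β : ℝ) : ℝ≥0∞ :=
  ∑' m : ℕ, ((2 ^ m + 1) ^ n : ℝ≥0∞) ^ (1 / q) * ENNReal.ofReal ((2 * 2⁻¹ ^ m) ^ β)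

lemma dyadicChainingConst_term_le (n m : ℕ) {q : ℝ} (hq : 0 < q) (β : ℝ) :
    ((2 ^ m + 1) ^ n : ℝ≥0∞) ^ (1 / q) * ENNReal.ofReal ((2 * 2⁻¹ ^ m) ^ β) ≤
      2 ^ (n / q + β) * (2 ^ (n / q - β)) ^ m := by
  have hcount : ((2 ^ m + 1) ^ n : ℝ≥0∞) ^ (1 / q) ≤ 2 ^ ((m + 1) * n / q) := by
    have h : (2 ^ m + 1 : ℝ≥0∞) ≤ 2 ^ (m + 1) := by
      have := Nat.one_le_two_pow (n := m)
      exact_mod_cast (show 2 ^ m + 1 ≤ 2 ^ (m + 1) by rw [pow_succ]; omega)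
    calc ((2 ^ m + 1) ^ n : ℝ≥0∞) ^ (1 / q) ≤ ((2 ^ (m + 1)) ^ n : ℝ≥0∞) ^ (1 / q) := by gcongr
      _ = 2 ^ ((m + 1) * n / q) := by
        rw [← pow_mul, ← ENNReal.rpow_natCast, ← ENNReal.rpow_mul]
        push_cast
        ring_nf
  have hscale : ENNReal.ofReal ((2 * 2⁻¹ ^ m) ^ β) = 2 ^ ((1 - m) * β) := by
    rw [show (2 : ℝ) * 2⁻¹ ^ m = 2 ^ (1 - m : ℝ) by
        rw [Real.rpow_sub two_pos, Real.rpow_one, Real.rpow_natCast, inv_pow, div_eq_mul_inv],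
      ← Real.rpow_mul zero_le_two, ← ENNReal.ofReal_rpow_of_pos two_pos, ENNReal.ofReal_ofNat]
  have hgeom : ((2 : ℝ≥0∞) ^ (n / q - β)) ^ m = 2 ^ ((n / q - β) * m) := by
    rw [← ENNReal.rpow_natCast, ← ENNReal.rpow_mul]
  rw [hscale, hgeom]
  refine (mul_le_mul_left hcount _).trans_eq ?_
  rw [← ENNReal.rpow_add _ _ two_ne_zero ENNReal.ofNat_ne_top,
    ← ENNReal.rpow_add _ _ two_ne_zero ENNReal.ofNat_ne_top]
  ring_nf

lemma dyadicChainingConst_ne_top (n : ℕ) {q β : ℝ} (hq : 0 < q) (hβ : n / q < β) :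
    dyadicChainingConst n q β ≠ ⊤ := by
  have hratio : (2 : ℝ≥0∞) ^ (n / q - β) < 1 :=
    ENNReal.rpow_lt_one_of_one_lt_of_neg ENNReal.one_lt_two (by linarith)
  refine ne_top_of_le_ne_top ?_
    (ENNReal.tsum_le_tsum fun m => dyadicChainingConst_term_le n m hq β)
  rw [ENNReal.tsum_mul_left, ENNReal.tsum_geometric]
  exact ENNReal.mul_ne_top (by simp) (ENNReal.inv_ne_top.2 (tsub_pos_iff_lt.2 hratio).ne')

lemma dyadicParent_mem_Icc {n : ℕ} (m : ℕ) {u : Fin n → ℝ} (hu : u ∈ Icc (0 : Fin n → ℝ) 1) :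
    dyadicParent m u ∈ Icc (0 : Fin n → ℝ) 1 := by
  cases m with
  | zero => exact left_mem_Icc.2 zero_le_one
  | succ m => exact dyadicGrid_subset_Icc n m (dyadicFloor_mem_dyadicGrid m hu)

section Chaining

variable {Ω E : Type*} [NormedAddCommGroup E] {n : ℕ}

noncomputable def dyadicIncrementSup (φ : (Fin n → ℝ) → Ω → E) (m : ℕ) (ω : Ω) : ℝ≥0∞ :=
  (dyadicGrid n m).sup fun u => ‖φ u ω - φ (dyadicParent m u) ω‖ₑ

noncomputable def dyadicMajorant (φ : (Fin n → ℝ) → Ω → E) (ω : Ω) : ℝ≥0∞ :=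
  ‖φ 0 ω‖ₑ + ∑' m, dyadicIncrementSup φ m ω

lemma enorm_le_dyadicMajorant {φ : (Fin n → ℝ) → Ω → E} {ω : Ω}
    (hω : ContinuousOn (fun t => φ t ω) (Icc 0 1)) {t : Fin n → ℝ}
    (ht : t ∈ Icc (0 : Fin n → ℝ) 1) : ‖φ t ω‖ₑ ≤ dyadicMajorant φ ω := by
  have hfloor_mem (m : ℕ) : dyadicFloor m t ∈ dyadicGrid n m := dyadicFloor_mem_dyadicGrid m ht
  have hchain : Tendsto (fun k => φ (dyadicParent k (dyadicFloor k t)) ω) atTop (𝓝 (φ t ω)) := by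
    refine (tendsto_add_atTop_iff_nat 1).1 ?_
    simp only [dyadicParent, dyadicFloor_dyadicFloor_succ]
    exact (hω t ht).tendsto.comp <| tendsto_nhdsWithin_iff.2
      ⟨tendsto_dyadicFloor t, .of_forall fun m => dyadicGrid_subset_Icc n m (hfloor_mem m)⟩
  refine (enorm_le_enorm_add_tsum_enorm_sub hchain).trans ?_
  refine add_le_add (le_of_eq rfl) (ENNReal.tsum_le_tsum fun m => ?_)
  rw [dyadicParent, dyadicFloor_dyadicFloor_succ]
  exact Finset.le_sup (f := fun u => ‖φ u ω - φ (dyadicParent m u) ω‖ₑ) (hfloor_mem m)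

variable [MeasurableSpace Ω] {P : Measure Ω} {φ : (Fin n → ℝ) → Ω → E}

lemma aemeasurable_dyadicIncrementSup
    (hmeas : ∀ t ∈ Icc (0 : Fin n → ℝ) 1, AEStronglyMeasurable (φ t) P) (m : ℕ) :
    AEMeasurable (dyadicIncrementSup φ m) P := by
  have hsup : AEMeasurable
      ((dyadicGrid n m).sup fun u ω => ‖φ u ω - φ (dyadicParent m u) ω‖ₑ) P :=
    Finset.sup_induction (p := fun g => AEMeasurable g P) aemeasurable_const
      (fun _ hf _ hg => hf.sup hg) fun u hu =>
      have hu' := dyadicGrid_subset_Icc n m hu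
      ((hmeas u hu').sub (hmeas _ (dyadicParent_mem_Icc m hu'))).enorm
  convert hsup using 1
  ext ω
  simp only [dyadicIncrementSup, Finset.sup_apply]

lemma aemeasurable_dyadicMajorant
    (hmeas : ∀ t ∈ Icc (0 : Fin n → ℝ) 1, AEStronglyMeasurable (φ t) P) :
    AEMeasurable (dyadicMajorant φ) P :=
  (hmeas 0 (left_mem_Icc.2 zero_le_one)).enorm.add
    (AEMeasurable.tsum (aemeasurable_dyadicIncrementSup hmeas))

lemma eLpNorm'_dyadicIncrementSup_le
    (hmeas : ∀ t ∈ Icc (0 : Fin n → ℝ) 1, AEStronglyMeasurable (φ t) P) {q β : ℝ} (hq : 0 < q)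
    (hβ : 0 ≤ β) {M : ℝ≥0∞}
    (hincr : ∀ s ∈ Icc (0 : Fin n → ℝ) 1, ∀ t ∈ Icc (0 : Fin n → ℝ) 1,
      eLpNorm' (φ s - φ t) q P ≤ M * ENNReal.ofReal (dist s t ^ β)) (m : ℕ) :
    eLpNorm' (dyadicIncrementSup φ m) q P ≤
      ((2 ^ m + 1) ^ n : ℝ≥0∞) ^ (1 / q) * ENNReal.ofReal ((2 * 2⁻¹ ^ m) ^ β) * M := by
  have hcard : ((dyadicGrid n m).card : ℝ≥0∞) ≤ (2 ^ m + 1) ^ n := by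
    exact_mod_cast card_dyadicGrid_le n m
  have hlevel := eLpNorm'_finsetSup_enorm_le (dyadicGrid n m)
    (f := fun u => φ u - φ (dyadicParent m u)) (c := M * ENNReal.ofReal ((2 * 2⁻¹ ^ m) ^ β))
    (fun u hu => have hu' := dyadicGrid_subset_Icc n m hu
      (hmeas u hu').sub (hmeas _ (dyadicParent_mem_Icc m hu'))) hq fun u hu => by
      have hu' := dyadicGrid_subset_Icc n m hu
      refine (hincr u hu' _ (dyadicParent_mem_Icc m hu')).trans ?_
      gcongr
      exact dist_dyadicParent_le m hu'
  calc eLpNorm' (dyadicIncrementSup φ m) q P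
      ≤ ((dyadicGrid n m).card : ℝ≥0∞) ^ (1 / q) * (M * ENNReal.ofReal ((2 * 2⁻¹ ^ m) ^ β)) :=
        hlevel
    _ ≤ _ := by
        rw [mul_comm M, ← mul_assoc]
        gcongr

lemma eLpNorm'_dyadicMajorant_le
    (hmeas : ∀ t ∈ Icc (0 : Fin n → ℝ) 1, AEStronglyMeasurable (φ t) P) {q β : ℝ} (hq : 1 ≤ q)
    (hβ : 0 ≤ β) {M : ℝ≥0∞}
    (hincr : ∀ s ∈ Icc (0 : Fin n → ℝ) 1, ∀ t ∈ Icc (0 : Fin n → ℝ) 1,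
      eLpNorm' (φ s - φ t) q P ≤ M * ENNReal.ofReal (dist s t ^ β)) :
    eLpNorm' (dyadicMajorant φ) q P ≤ eLpNorm' (φ 0) q P + dyadicChainingConst n q β * M := by
  have hq0 : 0 < q := one_pos.trans_le hq
  have hincrement_meas := aemeasurable_dyadicIncrementSup hmeas
  calc eLpNorm' (dyadicMajorant φ) q P
      ≤ eLpNorm' (fun ω => ‖φ 0 ω‖ₑ) q P +
          eLpNorm' (fun ω => ∑' m, dyadicIncrementSup φ m ω) q P :=
        eLpNorm'_add_le (hmeas 0 (left_mem_Icc.2 zero_le_one)).enorm.aestronglyMeasurable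
          (AEMeasurable.tsum hincrement_meas).aestronglyMeasurable hq
    _ ≤ eLpNorm' (φ 0) q P + ∑' m, eLpNorm' (dyadicIncrementSup φ m) q P := by
        rw [eLpNorm'_enorm]
        gcongr
        exact eLpNorm'_tsum_le hincrement_meas hq
    _ ≤ eLpNorm' (φ 0) q P + dyadicChainingConst n q β * M := by
        rw [dyadicChainingConst, ← ENNReal.tsum_mul_right]
        gcongr with m
        exact eLpNorm'_dyadicIncrementSup_le hmeas hq0 hβ hincr m

end Chaining

lemma ofReal_mul_eudist_rpow_rpow_half_le {n : ℕ} (s t : Fin n → ℝ) {K₀ δ : ℝ} (hK₀ : 0 ≤ K₀)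
    (hδ : 0 ≤ δ) : ENNReal.ofReal (K₀ * eudist s t ^ δ) ^ (1 / 2 : ℝ) ≤
      ENNReal.ofReal K₀ ^ (1 / 2 : ℝ) * ENNReal.ofReal (√n ^ (δ / 2)) *
        ENNReal.ofReal (dist s t ^ (δ / 2)) := by
  have heudist : 0 ≤ eudist s t := Real.sqrt_nonneg _
  rw [ENNReal.ofReal_rpow_of_nonneg (by positivity) (by norm_num),
    ENNReal.ofReal_rpow_of_nonneg hK₀ (by norm_num), ← ENNReal.ofReal_mul (by positivity),
    ← ENNReal.ofReal_mul (by positivity)]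
  refine ENNReal.ofReal_le_ofReal ?_
  calc (K₀ * eudist s t ^ δ) ^ (1 / 2 : ℝ) = K₀ ^ (1 / 2 : ℝ) * eudist s t ^ (δ / 2) := by
        rw [Real.mul_rpow hK₀ (by positivity), ← Real.rpow_mul heudist, mul_one_div]
    _ ≤ K₀ ^ (1 / 2 : ℝ) * (√n * dist s t) ^ (δ / 2) := by
        gcongr
        exact eudist_le_sqrt_mul_dist s t
    _ = K₀ ^ (1 / 2 : ℝ) * √n ^ (δ / 2) * dist s t ^ (δ / 2) := by
        rw [Real.mul_rpow (Real.sqrt_nonneg _) dist_nonneg, mul_assoc]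

lemma lintegral_rpow_le_eLpNorm'_rpow {Ω : Type*} [MeasurableSpace Ω] {P : Measure Ω}
    [IsProbabilityMeasure P] {G : Ω → ℝ≥0∞} (hG : AEMeasurable G P) {p q : ℝ} (hp : 0 < p)
    (hpq : p ≤ q) : ∫⁻ ω, G ω ^ p ∂P ≤ eLpNorm' G q P ^ p := by
  calc ∫⁻ ω, G ω ^ p ∂P = eLpNorm' G p P ^ p :=
        lintegral_rpow_enorm_eq_rpow_eLpNorm' (f := G) hp
    _ ≤ eLpNorm' G q P ^ p := by
        gcongr
        exact eLpNorm'_le_eLpNorm'_of_exponent_le hp hpq P hG.aestronglyMeasurable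

theorem lintegral_iSup_enorm_rpow_le {Ω E : Type*} [MeasurableSpace Ω] {P : Measure Ω}
    [IsProbabilityMeasure P] [NormedAddCommGroup E] {n : ℕ} {φ : (Fin n → ℝ) → Ω → E}
    (hcont : ∀ᵐ ω ∂P, ContinuousOn (fun t => φ t ω) (Icc 0 1))
    (hmeas : ∀ t ∈ Icc (0 : Fin n → ℝ) 1, AEStronglyMeasurable (φ t) P) {p q β : ℝ}
    (hp : 0 < p) (hpq : p ≤ q) (hq : 1 ≤ q) (hβ : 0 ≤ β) {M : ℝ≥0∞}
    (hincr : ∀ s ∈ Icc (0 : Fin n → ℝ) 1, ∀ t ∈ Icc (0 : Fin n → ℝ) 1,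
      eLpNorm' (φ s - φ t) q P ≤ M * ENNReal.ofReal (dist s t ^ β)) :
    ∫⁻ ω, ⨆ t ∈ Icc (0 : Fin n → ℝ) 1, ‖φ t ω‖ₑ ^ p ∂P ≤
      (eLpNorm' (φ 0) q P + dyadicChainingConst n q β * M) ^ p :=
  calc ∫⁻ ω, ⨆ t ∈ Icc (0 : Fin n → ℝ) 1, ‖φ t ω‖ₑ ^ p ∂P
      ≤ ∫⁻ ω, dyadicMajorant φ ω ^ p ∂P := by
        refine lintegral_mono_ae ?_
        filter_upwards [hcont] with ω hω
        exact iSup₂_le fun t ht => by gcongr; exact enorm_le_dyadicMajorant hω ht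
    _ ≤ eLpNorm' (dyadicMajorant φ) q P ^ p :=
        lintegral_rpow_le_eLpNorm'_rpow (aemeasurable_dyadicMajorant hmeas) hp hpq
    _ ≤ (eLpNorm' (φ 0) q P + dyadicChainingConst n q β * M) ^ p := by
        gcongr
        exact eLpNorm'_dyadicMajorant_le hmeas hq hβ hincr

theorem lintegral_iSup_rpow_le_of_moment_comparison {Ω E : Type*} [MeasurableSpace Ω]
    {P : Measure Ω} [IsProbabilityMeasure P] [NormedAddCommGroup E] {n : ℕ}
    {φ : (Fin n → ℝ) → Ω → E} {p q δ κ K₀ : ℝ} (hp : 0 < p) (hpq : p ≤ q) (hq : 1 ≤ q)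
    (hδ : 0 ≤ δ) (hK₀ : 0 ≤ K₀) (hcont : ∀ᵐ ω ∂P, ContinuousOn (fun t => φ t ω) (Icc 0 1))
    (hmeas : ∀ t ∈ Icc (0 : Fin n → ℝ) 1, AEStronglyMeasurable (φ t) P)
    (hmom : eLpNorm' (φ 0) q P ≤
      ENNReal.ofReal κ * (∫⁻ ω, ‖φ 0 ω‖ₑ ^ (2 : ℝ) ∂P) ^ (1 / 2 : ℝ))
    (hmom_sub : ∀ s ∈ Icc (0 : Fin n → ℝ) 1, ∀ t ∈ Icc (0 : Fin n → ℝ) 1,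
      eLpNorm' (φ s - φ t) q P ≤
        ENNReal.ofReal κ * (∫⁻ ω, ‖φ s ω - φ t ω‖ₑ ^ (2 : ℝ) ∂P) ^ (1 / 2 : ℝ))
    (hholder : ∀ s ∈ Icc (0 : Fin n → ℝ) 1, ∀ t ∈ Icc (0 : Fin n → ℝ) 1,
      ∫⁻ ω, ‖φ s ω - φ t ω‖ₑ ^ (2 : ℝ) ∂P ≤ ENNReal.ofReal (K₀ * eudist s t ^ δ)) :
    ∫⁻ ω, ⨆ t ∈ Icc (0 : Fin n → ℝ) 1, ‖φ t ω‖ₑ ^ p ∂P ≤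
      (ENNReal.ofReal κ *
          (1 + dyadicChainingConst n q (δ / 2) * ENNReal.ofReal (√n ^ (δ / 2)))) ^ p *
        (ENNReal.ofReal K₀ + ∫⁻ ω, ‖φ 0 ω‖ₑ ^ (2 : ℝ) ∂P) ^ (p / 2) := by
  set A := ENNReal.ofReal K₀ + ∫⁻ ω, ‖φ 0 ω‖ₑ ^ (2 : ℝ) ∂P
  have hincr (s) (hs : s ∈ Icc (0 : Fin n → ℝ) 1) (t) (ht : t ∈ Icc (0 : Fin n → ℝ) 1) :
      eLpNorm' (φ s - φ t) q P ≤ ENNReal.ofReal κ * ENNReal.ofReal K₀ ^ (1 / 2 : ℝ) *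
        ENNReal.ofReal (√n ^ (δ / 2)) * ENNReal.ofReal (dist s t ^ (δ / 2)) := by
    refine (hmom_sub s hs t ht).trans ?_
    simp only [mul_assoc]
    gcongr
    rw [← mul_assoc]
    exact (ENNReal.rpow_le_rpow (hholder s hs t ht) (by norm_num)).trans
      (ofReal_mul_eudist_rpow_rpow_half_le s t hK₀ hδ)
  calc ∫⁻ ω, ⨆ t ∈ Icc (0 : Fin n → ℝ) 1, ‖φ t ω‖ₑ ^ p ∂P
      ≤ (eLpNorm' (φ 0) q P + dyadicChainingConst n q (δ / 2) * (ENNReal.ofReal κ *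
          ENNReal.ofReal K₀ ^ (1 / 2 : ℝ) * ENNReal.ofReal (√n ^ (δ / 2)))) ^ p :=
        lintegral_iSup_enorm_rpow_le hcont hmeas hp hpq hq (by positivity) hincr
    _ ≤ (ENNReal.ofReal κ * A ^ (1 / 2 : ℝ) + dyadicChainingConst n q (δ / 2) *
          (ENNReal.ofReal κ * A ^ (1 / 2 : ℝ) * ENNReal.ofReal (√n ^ (δ / 2)))) ^ p := by
        grw [hmom, show ENNReal.ofReal K₀ ≤ A from le_self_add,
          show ∫⁻ ω, ‖φ 0 ω‖ₑ ^ (2 : ℝ) ∂P ≤ A from le_add_self]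
    _ = _ := by
        rw [show p / 2 = 1 / 2 * p by ring, ENNReal.rpow_mul,
          ← ENNReal.mul_rpow_of_nonneg _ _ hp.le]
        congr 1
        ring

theorem stmt_10_general {Ω : Type*} [MeasurableSpace Ω] (P : Measure Ω) [IsProbabilityMeasure P]
    {E : Type*} [NormedAddCommGroup E]
    (n : ℕ) (δ : ℝ) (hδ : 0 < δ)
    (K : ℝ → ℝ) (p : ℝ) (hp : 0 < p) :
    ∃ C > 0, ∀ K₀ : ℝ, 0 < K₀ → ∀ φ : (Fin n → ℝ) → Ω → E,
      (∀ᵐ ω ∂P, ContinuousOn (fun t => φ t ω) (Set.Icc 0 1)) →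
      (∀ t ∈ Set.Icc (0 : Fin n → ℝ) 1, AEStronglyMeasurable (φ t) P) →
      (∀ q, 2 < q → ∀ t ∈ Set.Icc (0 : Fin n → ℝ) 1,
        (∫⁻ ω, (‖φ t ω‖₊ : ℝ≥0∞) ^ q ∂P) ^ (1 / q) ≤
          ENNReal.ofReal (K q) * (∫⁻ ω, (‖φ t ω‖₊ : ℝ≥0∞) ^ (2 : ℝ) ∂P) ^ (1 / 2 : ℝ)) →
      (∀ q, 2 < q → ∀ s ∈ Set.Icc (0 : Fin n → ℝ) 1, ∀ t ∈ Set.Icc (0 : Fin n → ℝ) 1,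
        (∫⁻ ω, (‖φ s ω - φ t ω‖₊ : ℝ≥0∞) ^ q ∂P) ^ (1 / q) ≤
          ENNReal.ofReal (K q) *
            (∫⁻ ω, (‖φ s ω - φ t ω‖₊ : ℝ≥0∞) ^ (2 : ℝ) ∂P) ^ (1 / 2 : ℝ)) →
      (∀ s ∈ Set.Icc (0 : Fin n → ℝ) 1, ∀ t ∈ Set.Icc (0 : Fin n → ℝ) 1,
        (∫⁻ ω, (‖φ s ω - φ t ω‖₊ : ℝ≥0∞) ^ (2 : ℝ) ∂P) ≤
          ENNReal.ofReal (K₀ * eudist s t ^ δ)) →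
      (∫⁻ ω, ⨆ t ∈ Set.Icc (0 : Fin n → ℝ) 1, (‖φ t ω‖₊ : ℝ≥0∞) ^ p ∂P) ≤
        ENNReal.ofReal C *
          (ENNReal.ofReal K₀ + ∫⁻ ω, (‖φ 0 ω‖₊ : ℝ≥0∞) ^ (2 : ℝ) ∂P) ^ (p / 2) := by
  obtain ⟨q, hq⟩ := exists_gt (max (max 2 p) (2 * n / δ))
  obtain ⟨⟨hq2, hpq⟩, hnq⟩ : (2 < q ∧ p < q) ∧ 2 * n / δ < q := by
    simpa only [max_lt_iff] using hq
  have hβ : n / q < δ / 2 := by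
    rw [div_lt_iff₀ hδ] at hnq
    rw [div_lt_iff₀ (by linarith)]
    linarith
  set 𝒞 := ENNReal.ofReal (K q) *
    (1 + dyadicChainingConst n q (δ / 2) * ENNReal.ofReal (√n ^ (δ / 2)))
  have h𝒞 : 𝒞 ^ p ≠ ⊤ := by
    have := dyadicChainingConst_ne_top n (by linarith) hβ
    finiteness
  refine ⟨(𝒞 ^ p).toReal + 1, by positivity, fun K₀ hK₀ φ hcont hmeas hmom hmom_sub hholder => ?_⟩
  refine (lintegral_iSup_rpow_le_of_moment_comparison hp hpq.le (by linarith) hδ.le hK₀.le hcont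
    hmeas (hmom q hq2 0 (left_mem_Icc.2 zero_le_one)) (hmom_sub q hq2) hholder).trans
    (mul_le_mul_left ?_ _)
  rw [ENNReal.le_ofReal_iff_toReal_le h𝒞 (by positivity)]
  exact le_add_of_nonneg_right zero_le_one

/-- Kolmogorov-type continuity/moment criterion: if all `q`-th moments of the random
field `φ` (and of its increments) are comparable to the second moments, and the second
moments of increments satisfy a Hölder bound `E‖φ(s)-φ(t)‖² ≤ K₀|s-t|^δ`, then
`E sup_t ‖φ(t)‖^p ≤ C (K₀ + E‖φ(0)‖²)^{p/2}` with `C` independent of `K₀` and `φ`. -/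
theorem stmt_10 {Ω : Type*} [MeasurableSpace Ω] (P : Measure Ω) [IsProbabilityMeasure P]
    {E : Type*} [NormedAddCommGroup E] [NormedSpace ℝ E] [CompleteSpace E]
    [TopologicalSpace.SeparableSpace E]
    (n : ℕ) (hn : 1 ≤ n) (δ : ℝ) (hδ : 0 < δ)
    (K : ℝ → ℝ) (hK : ∀ q, 2 < q → 0 < K q) (p : ℝ) (hp : 0 < p) :
    ∃ C > 0, ∀ K₀ : ℝ, 0 < K₀ → ∀ φ : (Fin n → ℝ) → Ω → E,
      (∀ᵐ ω ∂P, ContinuousOn (fun t => φ t ω) (Set.Icc 0 1)) →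
      (∀ t ∈ Set.Icc (0 : Fin n → ℝ) 1, AEStronglyMeasurable (φ t) P) →
      (∀ q, 2 < q → ∀ t ∈ Set.Icc (0 : Fin n → ℝ) 1,
        (∫⁻ ω, (‖φ t ω‖₊ : ℝ≥0∞) ^ q ∂P) ^ (1 / q) ≤
          ENNReal.ofReal (K q) * (∫⁻ ω, (‖φ t ω‖₊ : ℝ≥0∞) ^ (2 : ℝ) ∂P) ^ (1 / 2 : ℝ)) →
      (∀ q, 2 < q → ∀ s ∈ Set.Icc (0 : Fin n → ℝ) 1, ∀ t ∈ Set.Icc (0 : Fin n → ℝ) 1,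
        (∫⁻ ω, (‖φ s ω - φ t ω‖₊ : ℝ≥0∞) ^ q ∂P) ^ (1 / q) ≤
          ENNReal.ofReal (K q) *
            (∫⁻ ω, (‖φ s ω - φ t ω‖₊ : ℝ≥0∞) ^ (2 : ℝ) ∂P) ^ (1 / 2 : ℝ)) →
      (∀ s ∈ Set.Icc (0 : Fin n → ℝ) 1, ∀ t ∈ Set.Icc (0 : Fin n → ℝ) 1,
        (∫⁻ ω, (‖φ s ω - φ t ω‖₊ : ℝ≥0∞) ^ (2 : ℝ) ∂P) ≤
          ENNReal.ofReal (K₀ * eudist s t ^ δ)) →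
      (∫⁻ ω, ⨆ t ∈ Set.Icc (0 : Fin n → ℝ) 1, (‖φ t ω‖₊ : ℝ≥0∞) ^ p ∂P) ≤
        ENNReal.ofReal C *
          (ENNReal.ofReal K₀ + ∫⁻ ω, (‖φ 0 ω‖₊ : ℝ≥0∞) ^ (2 : ℝ) ∂P) ^ (p / 2) :=
  stmt_10_general P n δ hδ K p hp
end

section
/- Let ν > 0, let f : [0,∞) → [0,+∞] satisfy f(0) = 1, f(x) ≥ q for all x > 0 for some q ∈ (0,1], and |f(x) − 1| ≤ c x² (with f(x) finite) for x ∈ [0,δ] for some c, δ > 0; let h : [0,∞) → ℝ be bounded with h(0) = 1 and |1 − h(x)| ≤ C₀ (1 ∧ x²) for some C₀ > 0. Then there exists C > 0 such that for all ε ∈ (0,1] and all nonzero k ∈ ℤ, ∫₀^∞ e^{−2t(1+νk²)} ( 1 − h(ε|k|) e^{−tνk²(f(ε|k|) − 1)} )² dt ≤ C min( k^{−2}, ε⁴ k² ), where the term h(ε|k|) e^{−tνk²(f(ε|k|)−1)} is interpreted as 0 when f(ε|k|) = +∞ and t > 0. -/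
/-!
With `a = 1 + νk²`, `b = 1 + νk² f(ε|k|)` and `H = h(ε|k|)`, the integrand is
`(e^{-at} - H e^{-bt})²`, so the integral is an explicit rational function `Q(H)` of `a`, `b`, `H`.
Being a squared `L²` distance, `Q` is nonnegative for every `H`, and the identities
`Q(H) + Q(-H) = 1/a + H²/b` and `Q(1 - g) + Q(1 + g) = 2 Q(1) + g²/b` turn this into the bounds
`Q(H) ≤ 1/a + H²/b = O(k⁻²)` and `Q(1 - g) ≤ (a - b)²/(ab(a + b)) + g²/b`. For `ε|k| ≤ δ` the latter
is `O(ε⁴k²)`, since `a - b = νk²(1 - f)` and `g = 1 - h` are `O(ε²k²)`; for `ε|k| > δ` the first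
bound suffices because `k⁻² ≤ δ⁻⁴ ε⁴k²`.
-/

open MeasureTheory Set Real
open scoped ENNReal

lemma integral_exp_neg_mul_Ioi_zero {b : ℝ} (hb : 0 < b) :
    ∫ t in Ioi (0 : ℝ), exp (-b * t) = 1 / b := by
  rw [integral_exp_mul_Ioi (neg_lt_zero.mpr hb), mul_zero, exp_zero, div_neg, neg_div, neg_neg]

noncomputable def sqDistExp (a b H : ℝ) : ℝ := 1 / (2 * a) - 2 * H / (a + b) + H ^ 2 / (2 * b)

lemma integral_sq_exp_sub_mul_exp {a b : ℝ} (ha : 0 < a) (hb : 0 < b) (H : ℝ) :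
    ∫ t in Ioi (0 : ℝ), (exp (-a * t) - H * exp (-b * t)) ^ 2 = sqDistExp a b H := by
  have hexp {c : ℝ} (hc : 0 < c) : IntegrableOn (fun t => exp (-c * t)) (Ioi 0) :=
    exp_neg_integrableOn_Ioi 0 hc
  have hexpand (t : ℝ) : (exp (-a * t) - H * exp (-b * t)) ^ 2
      = exp (-(2 * a) * t) - 2 * H * exp (-(a + b) * t) + H ^ 2 * exp (-(2 * b) * t) := by
    rw [show -(2 * a) * t = -a * t + -a * t by ring, show -(a + b) * t = -a * t + -b * t by ring,
      show -(2 * b) * t = -b * t + -b * t by ring, exp_add, exp_add, exp_add]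
    ring
  simp_rw [hexpand]
  rw [integral_add (by exact (hexp (by positivity)).sub ((hexp (by positivity)).const_mul _))
      ((hexp (by positivity)).const_mul _),
    integral_sub (hexp (by positivity)) ((hexp (by positivity)).const_mul _),
    integral_const_mul, integral_const_mul, integral_exp_neg_mul_Ioi_zero (by positivity),
    integral_exp_neg_mul_Ioi_zero (by positivity), integral_exp_neg_mul_Ioi_zero (by positivity),
    sqDistExp]
  ring

section sqDistExp

variable {a b : ℝ}

lemma sqDistExp_nonneg (ha : 0 < a) (hb : 0 < b) (H : ℝ) : 0 ≤ sqDistExp a b H := by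
  rw [← integral_sq_exp_sub_mul_exp ha hb]
  exact setIntegral_nonneg measurableSet_Ioi fun t _ => sq_nonneg _

-- `sqDistExp a b H + sqDistExp a b (-H) = 1 / a + H ^ 2 / b`.
lemma sqDistExp_le (ha : 0 < a) (hb : 0 < b) (H : ℝ) : sqDistExp a b H ≤ 1 / a + H ^ 2 / b := by
  have := sqDistExp_nonneg ha hb (-H)
  unfold sqDistExp at *
  linear_combination this

-- Parallelogram law:
-- `sqDistExp a b (1 - g) + sqDistExp a b (1 + g) = 2 * sqDistExp a b 1 + g ^ 2 / b`.
lemma sqDistExp_one_sub_le (ha : 0 < a) (hb : 0 < b) (g : ℝ) :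
    sqDistExp a b (1 - g) ≤ (a - b) ^ 2 / (a * b * (a + b)) + g ^ 2 / b := by
  have hone : 1 / a - 4 / (a + b) + 1 / b = (a - b) ^ 2 / (a * b * (a + b)) := by
    field_simp
    ring
  have := sqDistExp_nonneg ha hb (1 + g)
  unfold sqDistExp at *
  linear_combination this + hone

end sqDistExp

section Mode

variable {ν K F : ℝ}

lemma integral_mode_eq (hνK : 0 ≤ ν * K) (hF : 0 < 1 + ν * K * F) (H : ℝ) :
    ∫ t in Ioi (0 : ℝ), exp (-2 * t * (1 + ν * K)) * (1 - H * exp (-t * ν * K * (F - 1))) ^ 2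
      = sqDistExp (1 + ν * K) (1 + ν * K * F) H := by
  rw [← integral_sq_exp_sub_mul_exp (by positivity) hF]
  congr 1 with t
  rw [show -2 * t * (1 + ν * K) = -(1 + ν * K) * t + -(1 + ν * K) * t by ring,
    show -(1 + ν * K * F) * t = -(1 + ν * K) * t + -t * ν * K * (F - 1) by ring, exp_add, exp_add]
  ring

lemma integral_mode_le_inv (hνK : 0 < ν * K) {q : ℝ} (hq : 0 < q) (hF : q ≤ F) (H : ℝ) :
    ∫ t in Ioi (0 : ℝ), exp (-2 * t * (1 + ν * K)) * (1 - H * exp (-t * ν * K * (F - 1))) ^ 2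
      ≤ (1 + H ^ 2 / q) / (ν * K) := by
  rw [integral_mode_eq hνK.le (by nlinarith) H]
  generalize ν * K = r at hνK ⊢
  have hb : q * r ≤ 1 + r * F := by nlinarith
  have hb0 : 0 < 1 + r * F := (by positivity : 0 < q * r).trans_le hb
  calc _ ≤ 1 / (1 + r) + H ^ 2 / (1 + r * F) :=
        sqDistExp_le (by positivity) hb0 H
    _ ≤ 1 / r + H ^ 2 / (q * r) := by gcongr; linarith
    _ = (1 + H ^ 2 / q) / r := by field_simp

lemma integral_mode_le_sq_add_sq (hνK : 0 < ν * K) {q : ℝ} (hq : 0 < q) (hF : q ≤ F) {H η γ : ℝ}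
    (hFη : |F - 1| ≤ η) (hHγ : |1 - H| ≤ γ) :
    ∫ t in Ioi (0 : ℝ), exp (-2 * t * (1 + ν * K)) * (1 - H * exp (-t * ν * K * (F - 1))) ^ 2
      ≤ (η ^ 2 + γ ^ 2) / (q * (ν * K)) := by
  rw [integral_mode_eq hνK.le (by nlinarith) H]
  generalize ν * K = r at hνK ⊢
  have hb : q * r ≤ 1 + r * F := by nlinarith
  have hb0 : 0 < 1 + r * F := (by positivity : 0 < q * r).trans_le hb
  have key := sqDistExp_one_sub_le (a := 1 + r) (b := 1 + r * F) (by positivity) hb0 (1 - H)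
  rw [sub_sub_cancel, show (1 + r - (1 + r * F)) ^ 2 = r ^ 2 * (F - 1) ^ 2 by ring] at key
  have hFη' := abs_le.mp hFη
  have hHγ' := abs_le.mp hHγ
  have hden : r * (q * r) * r ≤ (1 + r) * (1 + r * F) * (1 + r + (1 + r * F)) := by
    gcongr <;> linarith
  calc _ ≤ _ := key
    _ ≤ r ^ 2 * η ^ 2 / (r * (q * r) * r) + γ ^ 2 / (q * r) :=
        add_le_add
          (div_le_div₀ (by positivity)
            (mul_le_mul_of_nonneg_left (sq_le_sq' hFη'.1 hFη'.2) (sq_nonneg r))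
            (by positivity) hden)
          (div_le_div₀ (sq_nonneg γ) (sq_le_sq' hHγ'.1 hHγ'.2) (by positivity) hb)
    _ = (η ^ 2 + γ ^ 2) / (q * r) := by field_simp

lemma integral_mode_ite_le_inv (hνK : 0 < ν * K) {q : ℝ} (hq : 0 < q) {F : ℝ≥0∞}
    (hF : ENNReal.ofReal q ≤ F) {H B : ℝ} (hH : |H| ≤ B) :
    ∫ t in Ioi (0 : ℝ), exp (-2 * t * (1 + ν * K)) *
        (1 - if F = ⊤ then 0 else H * exp (-t * ν * K * (F.toReal - 1))) ^ 2
      ≤ (1 + B ^ 2 / q) / (ν * K) := by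
  have hbound {H' : ℝ} (hH' : H' ^ 2 ≤ B ^ 2) {F' : ℝ} (hF' : q ≤ F') :
      ∫ t in Ioi (0 : ℝ), exp (-2 * t * (1 + ν * K)) * (1 - H' * exp (-t * ν * K * (F' - 1))) ^ 2
        ≤ (1 + B ^ 2 / q) / (ν * K) :=
    (integral_mode_le_inv hνK hq hF' H').trans (by gcongr)
  split_ifs with htop
  · simpa using hbound (H' := 0) (by simpa using sq_nonneg B) le_rfl
  · exact hbound (sq_le_sq' (abs_le.mp hH).1 (abs_le.mp hH).2)
      ((ENNReal.ofReal_le_iff_le_toReal htop).mp hF)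

end Mode

lemma inv_le_pow_four_mul_div {δ ε K : ℝ} (hδ : 0 < δ) (hK : 0 < K) (hδK : δ ^ 2 ≤ ε ^ 2 * K) :
    K⁻¹ ≤ ε ^ 4 * K / δ ^ 4 := by
  rw [le_div_iff₀ (by positivity), inv_mul_le_iff₀ hK]
  calc δ ^ 4 = (δ ^ 2) ^ 2 := by ring
    _ ≤ (ε ^ 2 * K) ^ 2 := by gcongr
    _ = K * (ε ^ 4 * K) := by ring

theorem stmt_11_general (ν : ℝ) (hν : 0 < ν)
    (f : ℝ → ℝ≥0∞)
    (q : ℝ) (hq0 : 0 < q) (hfq : ∀ x > (0 : ℝ), ENNReal.ofReal q ≤ f x)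
    (c δ : ℝ) (hδ : 0 < δ)
    (hfsmooth : ∀ x ∈ Set.Icc (0 : ℝ) δ, f x ≠ ⊤ ∧ |(f x).toReal - 1| ≤ c * x ^ 2)
    (h : ℝ → ℝ) (B : ℝ) (hB : ∀ x, |h x| ≤ B)
    (C₀ : ℝ) (hC₀ : 0 < C₀) (hh : ∀ x, |1 - h x| ≤ C₀ * min 1 (x ^ 2)) :
    ∃ C > 0, ∀ ε ∈ Set.Ioc (0 : ℝ) 1, ∀ k : ℤ, k ≠ 0 →
      (∫ t in Set.Ioi (0 : ℝ),
          Real.exp (-2 * t * (1 + ν * (k : ℝ) ^ 2)) *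
            (1 - (if f (ε * |(k : ℝ)|) = ⊤ then 0
              else h (ε * |(k : ℝ)|) *
                Real.exp (-t * ν * (k : ℝ) ^ 2 * ((f (ε * |(k : ℝ)|)).toReal - 1)))) ^ 2) ≤
        C * min (((k : ℝ) ^ 2)⁻¹) (ε ^ 4 * (k : ℝ) ^ 2) := by
  set C₁ := (1 + B ^ 2 / q) / ν
  set C₂ := (c ^ 2 + C₀ ^ 2) / (q * ν)
  have hC₁ : 0 < C₁ := by positivity
  refine ⟨max C₁ (max C₂ (C₁ / δ ^ 4)), lt_max_of_lt_left hC₁, ?_⟩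
  rintro ε ⟨hε, -⟩ k hk
  set x := ε * |(k : ℝ)|
  have hx : 0 < x := by positivity
  have hx2 : x ^ 2 = ε ^ 2 * (k : ℝ) ^ 2 := by rw [mul_pow, sq_abs]
  clear_value x
  have hνK : 0 < ν * (k : ℝ) ^ 2 := by positivity
  have hinv := (integral_mode_ite_le_inv hνK hq0 (hfq x hx) (hB x)).trans_eq
    (show _ = C₁ * ((k : ℝ) ^ 2)⁻¹ by simp only [C₁]; field_simp)
  rw [mul_min_of_nonneg _ _ (hC₁.le.trans (le_max_left _ _))]
  refine le_min (hinv.trans (by gcongr; exact le_max_left _ _)) ?_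
  refine le_trans ?_ (mul_le_mul_of_nonneg_right (le_max_right _ _) (by positivity))
  rcases le_or_gt x δ with hxδ | hxδ
  · obtain ⟨hfin, hfx⟩ := hfsmooth x ⟨hx.le, hxδ⟩
    simp only [hfin, if_false]
    calc _ ≤ ((c * x ^ 2) ^ 2 + (C₀ * x ^ 2) ^ 2) / (q * (ν * (k : ℝ) ^ 2)) :=
          integral_mode_le_sq_add_sq hνK hq0
            ((ENNReal.ofReal_le_iff_le_toReal hfin).mp (hfq x hx)) hfx
            ((hh x).trans (mul_le_mul_of_nonneg_left (min_le_right _ _) hC₀.le))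
      _ = C₂ * (ε ^ 4 * (k : ℝ) ^ 2) := by rw [hx2]; simp only [C₂]; field_simp
      _ ≤ _ := by gcongr; exact le_max_left _ _
  · calc _ ≤ C₁ * ((k : ℝ) ^ 2)⁻¹ := hinv
      _ ≤ C₁ * (ε ^ 4 * (k : ℝ) ^ 2 / δ ^ 4) := by
          gcongr
          exact inv_le_pow_four_mul_div hδ (by positivity) (by rw [← hx2]; gcongr)
      _ = C₁ / δ ^ 4 * (ε ^ 4 * (k : ℝ) ^ 2) := by ring
      _ ≤ _ := by gcongr; exact le_max_right _ _

/-- Itô-isometry bound `E|θ̃_k(t) - θ_k(t)|² ≤ C (k⁻² ∧ ε⁴k²)`, written as a deterministic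
integral estimate. The factor `h(ε|k|) e^{-tνk²(f(ε|k|)-1)}` is interpreted as `0` when
`f(ε|k|) = +∞`. -/
theorem stmt_11 (ν : ℝ) (hν : 0 < ν)
    (f : ℝ → ℝ≥0∞) (hf0 : f 0 = 1)
    (q : ℝ) (hq0 : 0 < q) (hq1 : q ≤ 1) (hfq : ∀ x > (0 : ℝ), ENNReal.ofReal q ≤ f x)
    (c δ : ℝ) (hc : 0 < c) (hδ : 0 < δ)
    (hfsmooth : ∀ x ∈ Set.Icc (0 : ℝ) δ, f x ≠ ⊤ ∧ |(f x).toReal - 1| ≤ c * x ^ 2)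
    (h : ℝ → ℝ) (B : ℝ) (hB : ∀ x, |h x| ≤ B) (hh0 : h 0 = 1)
    (C₀ : ℝ) (hC₀ : 0 < C₀) (hh : ∀ x, |1 - h x| ≤ C₀ * min 1 (x ^ 2)) :
    ∃ C > 0, ∀ ε ∈ Set.Ioc (0 : ℝ) 1, ∀ k : ℤ, k ≠ 0 →
      (∫ t in Set.Ioi (0 : ℝ),
          Real.exp (-2 * t * (1 + ν * (k : ℝ) ^ 2)) *
            (1 - (if f (ε * |(k : ℝ)|) = ⊤ then 0
              else h (ε * |(k : ℝ)|) *
                Real.exp (-t * ν * (k : ℝ) ^ 2 * ((f (ε * |(k : ℝ)|)).toReal - 1)))) ^ 2) ≤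
        C * min (((k : ℝ) ^ 2)⁻¹) (ε ^ 4 * (k : ℝ) ^ 2) :=
  stmt_11_general ν hν f q hq0 hfq c δ hδ hfsmooth h B hB C₀ hC₀ hh
end

section
/- Let μ be a finite signed Borel measure on ℝ with μ(ℝ) = 0 and ∫ y² |μ|(dy) < ∞, and set M = |μ|(ℝ). Then for every ε > 0 and every continuously differentiable 2π-periodic function u : ℝ → ℝ, the approximate derivative D_ε u satisfies ‖D_ε u‖_{L²([0,2π])} ≤ ( M ∫_ℝ y² |μ|(dy) )^{1/2} ‖u'‖_{L²([0,2π])}; in particular this bound is uniform in ε. -/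
/-!
Since `μ(ℝ) = 0`, `D_ε u(x) = ε⁻¹ ∫ (u(x + εy) - u(x)) μ(dy)`, so Cauchy–Schwarz against `|μ|` gives
`|D_ε u(x)|² ≤ ε⁻² M ∫ (u(x + εy) - u(x))² |μ|(dy)`. Integrating in `x` and swapping the integrals
reduces the claim to the periodic translation estimate `‖u(· + h) - u‖² ≤ h² ‖u'‖²`, which follows
from `u(x + h) - u(x) = h ∫₀¹ u'(x + hs) ds`, Cauchy–Schwarz in `s` and translation invariance of
`∫₀^{2π}` for periodic functions.
-/

open MeasureTheory Real Set

section

variable {α : Type*} [MeasurableSpace α] {f : α → ℝ}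

theorem sq_integral_le_measureReal_univ_mul_integral_sq {m : Measure α} [IsFiniteMeasure m]
    (hf : Integrable f m) (hf2 : Integrable (fun a => f a ^ 2) m) :
    (∫ a, f a ∂m) ^ 2 ≤ m.real univ * ∫ a, f a ^ 2 ∂m := by
  rcases eq_zero_or_neZero m with rfl | _
  · simp
  have hM : 0 < m.real univ := measureReal_univ_pos
  have jensen : ((m.real univ)⁻¹ * ∫ a, f a ∂m) ^ 2 ≤ (m.real univ)⁻¹ * ∫ a, f a ^ 2 ∂m := by
    simpa [average_eq] using (even_two.convexOn_pow (𝕜 := ℝ)).map_average_le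
      (continuous_pow 2).continuousOn isClosed_univ (ae_of_all _ fun _ => mem_univ _) hf hf2
  rw [mul_pow, inv_pow, ← div_eq_inv_mul, ← div_eq_inv_mul,
    div_le_div_iff₀ (by positivity) hM] at jensen
  nlinarith

theorem sq_integral_sub_integral_le {μp μn : Measure α} [IsFiniteMeasure μp] [IsFiniteMeasure μn]
    (hf : Integrable f (μp + μn)) (hf2 : Integrable (fun a => f a ^ 2) (μp + μn)) :
    (∫ a, f a ∂μp - ∫ a, f a ∂μn) ^ 2 ≤ (μp + μn).real univ * ∫ a, f a ^ 2 ∂(μp + μn) := by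
  have hp : Integrable f μp := hf.mono_measure (Measure.le_add_right le_rfl)
  have hn : Integrable f μn := hf.mono_measure (Measure.le_add_left le_rfl)
  have triangle : |∫ a, f a ∂μp - ∫ a, f a ∂μn| ≤ ∫ a, |f a| ∂(μp + μn) := by
    rw [integral_add_measure hp.abs hn.abs]
    exact (abs_sub _ _).trans
      (add_le_add abs_integral_le_integral_abs abs_integral_le_integral_abs)
  calc (∫ a, f a ∂μp - ∫ a, f a ∂μn) ^ 2 ≤ (∫ a, |f a| ∂(μp + μn)) ^ 2 := by
        rw [← sq_abs]; exact pow_le_pow_left₀ (abs_nonneg _) triangle 2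
    _ ≤ (μp + μn).real univ * ∫ a, f a ^ 2 ∂(μp + μn) := by
        simpa only [sq_abs] using
          sq_integral_le_measureReal_univ_mul_integral_sq hf.abs (by simpa only [sq_abs] using hf2)

theorem integral_sub_integral_eq_of_measure_univ_eq {μp μn : Measure α} [IsFiniteMeasure μp]
    [IsFiniteMeasure μn] (hzero : μp univ = μn univ) (hp : Integrable f μp) (hn : Integrable f μn)
    (c : ℝ) : ∫ a, f a ∂μp - ∫ a, f a ∂μn = ∫ a, (f a - c) ∂μp - ∫ a, (f a - c) ∂μn := by
  rw [integral_sub hp (integrable_const c), integral_sub hn (integrable_const c), integral_const,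
    integral_const, measureReal_def, measureReal_def, hzero]
  ring

end

section

variable {u : ℝ → ℝ} {T : ℝ}

theorem Function.Periodic.deriv (hper : Function.Periodic u T) : Function.Periodic (deriv u) T :=
  fun x => by rw [← deriv_comp_add_const, show (fun t => u (t + T)) = u from funext hper]

theorem sub_eq_mul_integral_deriv (hu : ContDiff ℝ 1 u) (x h : ℝ) :
    u (x + h) - u x = h * ∫ s in (0 : ℝ)..1, deriv u (x + h * s) := by
  rcases eq_or_ne h 0 with rfl | hh
  · simp
  have ftc : ∫ t in x..x + h, deriv u t = u (x + h) - u x :=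
    intervalIntegral.integral_deriv_eq_sub
      (fun t _ => (hu.differentiable one_ne_zero).differentiableAt)
      ((hu.continuous_deriv le_rfl).intervalIntegrable _ _)
  simp_rw [add_comm x (h * _), intervalIntegral.integral_comp_mul_add (deriv u) hh x]
  rw [smul_eq_mul, ← mul_assoc, mul_inv_cancel₀ hh, one_mul, ← ftc]
  simp [add_comm]

theorem sq_sub_le_mul_integral_sq_deriv (hu : ContDiff ℝ 1 u) (x h : ℝ) :
    (u (x + h) - u x) ^ 2 ≤ h ^ 2 * ∫ s in (0 : ℝ)..1, deriv u (x + h * s) ^ 2 := by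
  have hcont : Continuous fun s => deriv u (x + h * s) := by
    have := hu.continuous_deriv le_rfl; fun_prop
  have cs := sq_integral_le_measureReal_univ_mul_integral_sq (m := volume.restrict (Ioc (0 : ℝ) 1))
    (hcont.integrableOn_Ioc) ((hcont.pow 2).integrableOn_Ioc)
  rw [sub_eq_mul_integral_deriv hu, mul_pow, intervalIntegral.integral_of_le zero_le_one,
    intervalIntegral.integral_of_le zero_le_one]
  refine mul_le_mul_of_nonneg_left ?_ (sq_nonneg h)
  simpa using cs

theorem Function.Periodic.intervalIntegral_comp_add_right {g : ℝ → ℝ} (hg : Function.Periodic g T)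
    (c : ℝ) : ∫ x in (0 : ℝ)..T, g (x + c) = ∫ x in (0 : ℝ)..T, g x := by
  simpa [add_comm] using hg.intervalIntegral_add_eq c 0

theorem integral_sq_sub_comp_add_le (hu : ContDiff ℝ 1 u) (hper : Function.Periodic u T)
    (hT : 0 ≤ T) (h : ℝ) :
    ∫ x in (0 : ℝ)..T, (u (x + h) - u x) ^ 2 ≤ h ^ 2 * ∫ x in (0 : ℝ)..T, deriv u x ^ 2 := by
  set F : ℝ → ℝ → ℝ := fun x s => deriv u (x + h * s) ^ 2 with hF
  have hFcont : Continuous (Function.uncurry F) := by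
    have := hu.continuous_deriv le_rfl; simp only [hF]; fun_prop
  have hFint : Integrable (Function.uncurry F)
      ((volume.restrict (Ioc 0 T)).prod (volume.restrict (Ioc (0 : ℝ) 1))) := by
    rw [Measure.prod_restrict, ← Measure.volume_eq_prod]
    exact (hFcont.continuousOn.integrableOn_compact (isCompact_Icc.prod isCompact_Icc)).mono_set
      (prod_mono Ioc_subset_Icc_self Ioc_subset_Icc_self)
  have hshift : ∀ s, ∫ x in (0 : ℝ)..T, F x s = ∫ x in (0 : ℝ)..T, deriv u x ^ 2 := fun s =>
    (hper.deriv.comp fun t => t ^ 2).intervalIntegral_comp_add_right (h * s)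
  calc ∫ x in (0 : ℝ)..T, (u (x + h) - u x) ^ 2
      ≤ ∫ x in (0 : ℝ)..T, h ^ 2 * ∫ s in (0 : ℝ)..1, F x s := by
        simp only [intervalIntegral.integral_of_le hT, intervalIntegral.integral_of_le zero_le_one]
        exact integral_mono_of_nonneg (ae_of_all _ fun _ => sq_nonneg _)
          (hFint.integral_prod_left.const_mul _)
          (ae_of_all _ fun x => by
            simpa [intervalIntegral.integral_of_le zero_le_one] using
              sq_sub_le_mul_integral_sq_deriv hu x h)
    _ = h ^ 2 * ∫ s in (0 : ℝ)..1, ∫ x in (0 : ℝ)..T, F x s := by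
        simp only [intervalIntegral.integral_of_le hT, intervalIntegral.integral_of_le zero_le_one]
        rw [integral_const_mul, integral_integral_swap hFint]
    _ = h ^ 2 * ∫ x in (0 : ℝ)..T, deriv u x ^ 2 := by simp [hshift]

theorem Function.Periodic.exists_abs_le (hu : Continuous u) (hper : Function.Periodic u T)
    (hT : T ≠ 0) : ∃ C, ∀ x, |u x| ≤ C := by
  obtain ⟨C, hC⟩ := (hper.isBounded_of_continuous hT hu).exists_norm_le
  exact ⟨C, fun x => hC _ (mem_range_self x)⟩

theorem integrable_pow_sub_comp {X : Type*} [TopologicalSpace X] [MeasurableSpace X]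
    [OpensMeasurableSpace X] [SecondCountableTopology X] {m : Measure X} [IsFiniteMeasure m]
    {C : ℝ} (hu : Continuous u) (hC : ∀ x, |u x| ≤ C) {a b : X → ℝ} (ha : Continuous a)
    (hb : Continuous b) (n : ℕ) : Integrable (fun p => (u (a p) - u (b p)) ^ n) m := by
  refine Integrable.of_bound (by fun_prop) ((C + C) ^ n) (ae_of_all _ fun p => ?_)
  rw [Real.norm_eq_abs, abs_pow]
  exact pow_le_pow_left₀ (abs_nonneg _) ((abs_sub _ _).trans (add_le_add (hC _) (hC _))) n

theorem setIntegral_integral_sq_sub_comp_add_mul_le (hu : ContDiff ℝ 1 u)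
    (hper : Function.Periodic u T) (hT : 0 < T) {ν : Measure ℝ} [IsFiniteMeasure ν]
    (hmom : Integrable (fun y => y ^ 2) ν) (ε : ℝ) :
    ∫ x in Ioc 0 T, ∫ y, (u (x + ε * y) - u x) ^ 2 ∂ν ≤
      ε ^ 2 * (∫ y, y ^ 2 ∂ν) * ∫ x in (0 : ℝ)..T, deriv u x ^ 2 := by
  obtain ⟨C, hC⟩ := hper.exists_abs_le hu.continuous hT.ne'
  have hint := integrable_pow_sub_comp (m := (volume.restrict (Ioc 0 T)).prod ν) hu.continuous hC
    (a := fun p : ℝ × ℝ => p.1 + ε * p.2) (by fun_prop) continuous_fst 2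
  have hslice : ∀ y, ∫ x in Ioc 0 T, (u (x + ε * y) - u x) ^ 2 ≤
      (ε * y) ^ 2 * ∫ x in (0 : ℝ)..T, deriv u x ^ 2 := fun y => by
    simpa only [intervalIntegral.integral_of_le hT.le] using
      integral_sq_sub_comp_add_le hu hper hT.le (ε * y)
  rw [integral_integral_swap (f := fun x y => (u (x + ε * y) - u x) ^ 2) hint]
  calc _ ≤ ∫ y, (ε * y) ^ 2 * (∫ x in (0 : ℝ)..T, deriv u x ^ 2) ∂ν := by
        refine integral_mono (hint.integral_prod_right :) ?_ hslice
        simpa only [mul_pow] using (hmom.const_mul (ε ^ 2)).mul_const _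
    _ = ε ^ 2 * (∫ y, y ^ 2 ∂ν) * ∫ x in (0 : ℝ)..T, deriv u x ^ 2 := by
        simp only [mul_pow, integral_mul_const, integral_const_mul]

theorem sq_integral_sub_integral_comp_add_mul_le {μp μn : Measure ℝ} [IsFiniteMeasure μp]
    [IsFiniteMeasure μn] (hzero : μp univ = μn univ) {C : ℝ} (hu : Continuous u)
    (hC : ∀ x, |u x| ≤ C) (ε x : ℝ) :
    (∫ y, u (x + ε * y) ∂μp - ∫ y, u (x + ε * y) ∂μn) ^ 2 ≤
      (μp + μn).real univ * ∫ y, (u (x + ε * y) - u x) ^ 2 ∂(μp + μn) := by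
  have hint : ∀ (m : Measure ℝ) [IsFiniteMeasure m], Integrable (fun y => u (x + ε * y)) m :=
    fun m _ => Integrable.of_bound (by fun_prop) C (ae_of_all _ fun y => hC _)
  rw [integral_sub_integral_eq_of_measure_univ_eq hzero (hint μp) (hint μn) (u x)]
  refine sq_integral_sub_integral_le ?_ (integrable_pow_sub_comp hu hC (by fun_prop)
    continuous_const 2)
  simpa using integrable_pow_sub_comp (m := μp + μn) hu hC (a := fun y => x + ε * y)
    (by fun_prop) continuous_const 1

theorem setIntegral_sq_integral_sub_integral_comp_add_mul_le {μp μn : Measure ℝ}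
    [IsFiniteMeasure μp] [IsFiniteMeasure μn] (hzero : μp univ = μn univ)
    (hmom : Integrable (fun y => y ^ 2) (μp + μn)) (hu : ContDiff ℝ 1 u)
    (hper : Function.Periodic u T) (hT : 0 < T) (ε : ℝ) :
    ∫ x in Ioc 0 T, (∫ y, u (x + ε * y) ∂μp - ∫ y, u (x + ε * y) ∂μn) ^ 2 ≤
      (μp + μn).real univ * (ε ^ 2 * (∫ y, y ^ 2 ∂(μp + μn)) *
        ∫ x in (0 : ℝ)..T, deriv u x ^ 2) := by
  obtain ⟨C, hC⟩ := hper.exists_abs_le hu.continuous hT.ne'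
  have hprod := integrable_pow_sub_comp (m := (volume.restrict (Ioc 0 T)).prod (μp + μn))
    hu.continuous hC (a := fun p : ℝ × ℝ => p.1 + ε * p.2) (by fun_prop) continuous_fst 2
  calc _ ≤ ∫ x in Ioc 0 T,
        (μp + μn).real univ * ∫ y, (u (x + ε * y) - u x) ^ 2 ∂(μp + μn) :=
        integral_mono_of_nonneg (ae_of_all _ fun _ => sq_nonneg _)
          (hprod.integral_prod_left.const_mul _)
          (ae_of_all _ (sq_integral_sub_integral_comp_add_mul_le hzero hu.continuous hC ε))
    _ ≤ _ := by
        rw [integral_const_mul]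
        gcongr
        exact setIntegral_integral_sq_sub_comp_add_mul_le hu hper hT hmom ε

end

/-- `L²` bound for the approximate derivative, uniform in `ε`:
`‖D_ε u‖_{L²([0,2π])} ≤ (M ∫ y² |μ|(dy))^{1/2} ‖u'‖_{L²([0,2π])}`, where `μ = μp - μn`
is a finite signed measure with `μ(ℝ) = 0`, `M = |μ|(ℝ)` and
`(D_ε u)(x) = ε⁻¹ ∫ u(x+εy) μ(dy)`. -/
theorem stmt_12 (μp μn : Measure ℝ) [IsFiniteMeasure μp] [IsFiniteMeasure μn]
    (hzero : μp Set.univ = μn Set.univ)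
    (hmom : Integrable (fun y : ℝ => y ^ 2) (μp + μn))
    (ε : ℝ) (hε : 0 < ε)
    (u : ℝ → ℝ) (hu : ContDiff ℝ 1 u) (hper : Function.Periodic u (2 * π)) :
    Real.sqrt (∫ x in (0 : ℝ)..(2 * π),
        (ε⁻¹ * ((∫ y, u (x + ε * y) ∂μp) - ∫ y, u (x + ε * y) ∂μn)) ^ 2) ≤
      Real.sqrt (((μp + μn) Set.univ).toReal * ∫ y, y ^ 2 ∂(μp + μn)) *
        Real.sqrt (∫ x in (0 : ℝ)..(2 * π), deriv u x ^ 2) := by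
  have hT : 0 < 2 * π := by positivity
  have key : ∫ x in (0 : ℝ)..(2 * π),
      (ε⁻¹ * ((∫ y, u (x + ε * y) ∂μp) - ∫ y, u (x + ε * y) ∂μn)) ^ 2 ≤
      (μp + μn).real univ * (∫ y, y ^ 2 ∂(μp + μn)) * ∫ x in (0 : ℝ)..(2 * π), deriv u x ^ 2 := by
    calc _ = ε⁻¹ ^ 2 * ∫ x in Ioc 0 (2 * π),
          (∫ y, u (x + ε * y) ∂μp - ∫ y, u (x + ε * y) ∂μn) ^ 2 := by
          simp only [intervalIntegral.integral_of_le hT.le, mul_pow, integral_const_mul]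
      _ ≤ ε⁻¹ ^ 2 * ((μp + μn).real univ * (ε ^ 2 * (∫ y, y ^ 2 ∂(μp + μn)) *
          ∫ x in (0 : ℝ)..(2 * π), deriv u x ^ 2)) := by
          gcongr
          exact setIntegral_sq_integral_sub_integral_comp_add_mul_le hzero hmom hu hper hT ε
      _ = _ := by field_simp
  rw [← Real.sqrt_mul (by positivity)]
  exact Real.sqrt_le_sqrt key
end

section
/- There exists a universal constant C > 0 such that for every y ∈ ℝ, the function Ψ_y(t) = (1 − cos(yt))/t² on (0,∞) has total variation at most C y²; explicitly, ∫₀^∞ | y t sin(yt) + 2 cos(yt) − 2 | / t³ dt ≤ C y². -/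
/-!
Substituting `s = y t` (the integrand is even in `y`) turns the integral into
`y² ∫₀^∞ |s sin s + 2 cos s - 2| / s³ ds`, so only the finiteness of this last integral matters.
Its numerator is `O(s⁴)` at `0` (Taylor expansion to order four) and `O(s)` at infinity, so the
integrand is dominated by `10 / (1 + s²)`, whose integral over `(0, ∞)` is `π / 2`.
-/

open MeasureTheory Real Set

lemma abs_mul_sin_add_two_mul_cos_sub_two_le_pow_four {u : ℝ} (hu : |u| ≤ 1) :
    |u * sin u + 2 * cos u - 2| ≤ u ^ 4 := by
  have hsin := sin_bound hu
  have hcos := cos_bound hu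
  have hu4 : u ^ 4 = |u| ^ 4 := ((even_two_mul 2).pow_abs u).symm
  have hu6 : |u| ^ 6 ≤ |u| ^ 4 := pow_le_pow_of_le_one (abs_nonneg u) hu (by norm_num)
  calc |u * sin u + 2 * cos u - 2|
      = |u * (sin u - (u - u ^ 3 / 6)) + 2 * (cos u - (1 - u ^ 2 / 2)) - u ^ 4 / 6| := by ring_nf
    _ ≤ |u| * (|u| ^ 5 / 100) + 2 * (|u| ^ 4 * (5 / 96)) + u ^ 4 / 6 := by
      refine (abs_sub _ _).trans (add_le_add ((abs_add_le _ _).trans (add_le_add ?_ ?_)) ?_)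
      · rw [abs_mul]; gcongr
      · rw [abs_mul, abs_two]; gcongr
      · rw [abs_of_nonneg (by positivity)]
    _ ≤ u ^ 4 := by rw [hu4]; nlinarith

lemma abs_mul_sin_add_two_mul_cos_sub_two_le_abs_add_four (u : ℝ) :
    |u * sin u + 2 * cos u - 2| ≤ |u| + 4 := by
  have hsin : |u * sin u| ≤ |u| := by
    rw [abs_mul]; exact mul_le_of_le_one_right (abs_nonneg u) (abs_sin_le_one u)
  have hcos : |2 * cos u - 2| ≤ 4 := by
    rw [abs_le]; constructor <;> nlinarith [neg_one_le_cos u, cos_le_one u]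
  calc |u * sin u + 2 * cos u - 2| = |u * sin u + (2 * cos u - 2)| := by ring_nf
    _ ≤ |u| + 4 := (abs_add_le _ _).trans (add_le_add hsin hcos)

lemma abs_mul_sin_add_two_mul_cos_sub_two_div_pow_three_le {s : ℝ} (hs : 0 < s) :
    |s * sin s + 2 * cos s - 2| / s ^ 3 ≤ 10 * (1 + s ^ 2)⁻¹ := by
  rw [div_le_iff₀ (by positivity), ← div_eq_mul_inv, div_mul_eq_mul_div,
    le_div_iff₀ (by positivity)]
  rcases le_total s 1 with hs1 | hs1
  · have := abs_mul_sin_add_two_mul_cos_sub_two_le_pow_four (abs_le.2 ⟨by linarith, hs1⟩)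
    have hs4 : s ^ 4 ≤ s ^ 3 := pow_le_pow_of_le_one hs.le hs1 (by norm_num)
    nlinarith [mul_le_mul_of_nonneg_right this (by positivity : (0 : ℝ) ≤ 1 + s ^ 2)]
  · have := abs_mul_sin_add_two_mul_cos_sub_two_le_abs_add_four s
    rw [abs_of_pos hs] at this
    nlinarith [mul_le_mul_of_nonneg_right this (by positivity : (0 : ℝ) ≤ 1 + s ^ 2)]

lemma integral_Ioi_comp_mul_div_pow (F : ℝ → ℝ) (n : ℕ) {b : ℝ} (hb : 0 < b) :
    ∫ t in Ioi 0, F (b * t) / t ^ n = b ^ n / b * ∫ s in Ioi 0, F s / s ^ n := by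
  have hscale (t : ℝ) : F (b * t) / t ^ n = b ^ n * (F (b * t) / (b * t) ^ n) := by
    rw [mul_pow, ← mul_div_assoc, mul_div_mul_left _ _ (pow_ne_zero n hb.ne')]
  simp_rw [hscale]
  rw [integral_const_mul, integral_comp_mul_left_Ioi (fun s => F s / s ^ n) 0 hb, mul_zero,
    smul_eq_mul, div_eq_mul_inv, mul_assoc]

lemma integral_Ioi_abs_mul_sin_add_two_mul_cos_sub_two_div_pow_three_le :
    ∫ s in Ioi 0, |s * sin s + 2 * cos s - 2| / s ^ 3 ≤ 5 * π := by
  have hdom : IntegrableOn (fun s : ℝ => 10 * (1 + s ^ 2)⁻¹) (Ioi 0) :=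
    (integrable_inv_one_add_sq.const_mul 10).integrableOn
  have hint : IntegrableOn (fun s => |s * sin s + 2 * cos s - 2| / s ^ 3) (Ioi 0) := by
    refine hdom.mono' (by fun_prop : Measurable _).aestronglyMeasurable
      ((ae_restrict_iff' measurableSet_Ioi).2 ?_)
    filter_upwards with s hs
    rw [Real.norm_of_nonneg (div_nonneg (abs_nonneg _) (pow_pos hs 3).le)]
    exact abs_mul_sin_add_two_mul_cos_sub_two_div_pow_three_le hs
  calc ∫ s in Ioi 0, |s * sin s + 2 * cos s - 2| / s ^ 3
      ≤ ∫ s in Ioi 0, 10 * (1 + s ^ 2)⁻¹ :=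
        setIntegral_mono_on hint hdom measurableSet_Ioi
          fun s hs => abs_mul_sin_add_two_mul_cos_sub_two_div_pow_three_le hs
    _ = 5 * π := by rw [integral_const_mul, integral_Ioi_inv_one_add_sq, arctan_zero]; ring

/-- The total variation of `Ψ_y(t) = (1 - cos(yt))/t²` on `(0,∞)` is at most `C y²`:
`∫₀^∞ |y t sin(yt) + 2 cos(yt) - 2| / t³ dt ≤ C y²`. -/
theorem stmt_13 : ∃ C > 0, ∀ y : ℝ,
    (∫ t in Set.Ioi (0 : ℝ),
        |y * t * Real.sin (y * t) + 2 * Real.cos (y * t) - 2| / t ^ 3) ≤ C * y ^ 2 := by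
  refine ⟨5 * π, by positivity, fun y => ?_⟩
  wlog hy : 0 ≤ y generalizing y
  · simpa using this (-y) (by linarith)
  rcases hy.eq_or_lt with rfl | hy
  · simp
  have hscale := integral_Ioi_comp_mul_div_pow (fun u => |u * sin u + 2 * cos u - 2|) 3 hy
  rw [hscale]
  calc y ^ 3 / y * ∫ s in Ioi 0, |s * sin s + 2 * cos s - 2| / s ^ 3
      ≤ y ^ 3 / y * (5 * π) := by
        gcongr
        exact integral_Ioi_abs_mul_sin_add_two_mul_cos_sub_two_div_pow_three_le
    _ = 5 * π * y ^ 2 := by field_simp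
end

section
/- Let Φ : (0,∞) → ℝ be integrable and of bounded variation, with total variation ‖Φ‖_BV over (0,∞). Then for every ε > 0, | Σ_{k=1}^∞ ε Φ(εk) − ∫₀^∞ Φ(t) dt | ≤ ε ‖Φ‖_BV (in particular the series converges absolutely). -/
open MeasureTheory Set Filter

/-! Cut `(0, ∞)` into the intervals `I_k = (εk, ε(k+1)]`. On `I_k` the function differs from its
value at the right endpoint `ε(k+1)` by at most its variation `V_k` on `I_k`, so
`|ε Φ(ε(k+1)) - ∫_{I_k} Φ| ≤ ε V_k`. Summing over `k`, the integrals add up to `∫₀^∞ Φ` and the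
variations `V_k` to at most `‖Φ‖_BV`, since the intervals are disjoint and ordered. -/

theorem tsum_eVariationOn_Ioc_le {α E : Type*} [LinearOrder α] [PseudoEMetricSpace E]
    {f : α → E} {u : ℕ → α} (hu : StrictMono u) :
    ∑' k, eVariationOn f (Ioc (u k) (u (k + 1))) ≤ eVariationOn f (Ioi (u 0)) := by
  refine ENNReal.tsum_le_of_sum_range_le fun n => ?_
  calc ∑ k ∈ Finset.range n, eVariationOn f (Ioc (u k) (u (k + 1)))
      ≤ ∑ k ∈ Finset.range n, eVariationOn f (Ioi (u 0) ∩ Icc (u k) (u (k + 1))) :=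
        Finset.sum_le_sum fun k _ => eVariationOn.mono f fun x hx =>
          ⟨(hu.monotone (Nat.zero_le k)).trans_lt hx.1, hx.1.le, hx.2⟩
    _ = eVariationOn f (Ioi (u 0) ∩ Icc (u 0) (u n)) :=
        eVariationOn.sum f hu.monotone fun _ hi _ => hu hi
    _ ≤ eVariationOn f (Ioi (u 0)) := eVariationOn.mono f inter_subset_left

section NormedGroup

variable {α E : Type*} [LinearOrder α] [NormedAddCommGroup E]

theorem norm_sub_le_toReal_eVariationOn {f : α → E} {s : Set α} (hf : eVariationOn f s ≠ ⊤)
    {x y : α} (hx : x ∈ s) (hy : y ∈ s) : ‖f x - f y‖ ≤ (eVariationOn f s).toReal := by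
  rw [← dist_eq_norm, dist_edist]
  exact ENNReal.toReal_mono hf (eVariationOn.edist_le f hx hy)

variable [NormedSpace ℝ E] [CompleteSpace E] [MeasurableSpace α] {μ : Measure α}

theorem norm_measureReal_smul_sub_setIntegral_le {f : α → E} {s : Set α} {x : α} (hx : x ∈ s)
    (hs : μ s ≠ ⊤) (hfi : IntegrableOn f s μ) (hf : eVariationOn f s ≠ ⊤) :
    ‖μ.real s • f x - ∫ t in s, f t ∂μ‖ ≤ μ.real s * (eVariationOn f s).toReal := by
  rw [← setIntegral_const, ← integral_sub (integrableOn_const (C := f x) hs) hfi, mul_comm]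
  exact norm_setIntegral_le_of_norm_le_const hs.lt_top fun t ht =>
    norm_sub_le_toReal_eVariationOn hf hx ht

theorem norm_sub_smul_setIntegral_Ioc_le {f : ℝ → E} {a b : ℝ} (hab : a < b)
    (hfi : IntegrableOn f (Ioc a b)) (hf : eVariationOn f (Ioc a b) ≠ ⊤) :
    ‖(b - a) • f b - ∫ t in Ioc a b, f t‖ ≤ (b - a) * (eVariationOn f (Ioc a b)).toReal := by
  simpa [Real.volume_real_Ioc_of_le hab.le] using
    norm_measureReal_smul_sub_setIntegral_le (right_mem_Ioc.2 hab) measure_Ioc_lt_top.ne hfi hf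

end NormedGroup

theorem hasSum_setIntegral_Ioc {α E : Type*} [LinearOrder α] [TopologicalSpace α]
    [OrderClosedTopology α] [MeasurableSpace α] [OpensMeasurableSpace α] [NormedAddCommGroup E]
    [NormedSpace ℝ E] {μ : Measure α} {f : α → E} {u : ℕ → α} (hu : Monotone u)
    (hu' : ¬BddAbove (range u)) (hf : IntegrableOn f (Ioi (u 0)) μ) :
    HasSum (fun k => ∫ t in Ioc (u k) (u (k + 1)), f t ∂μ) (∫ t in Ioi (u 0), f t ∂μ) := by
  have hunion : ⋃ k, Ioc (u k) (u (k + 1)) = Ioi (u 0) :=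
    iUnion_Ioc_map_succ_eq_Ioi (fun k => hu (Nat.zero_le k)) hu'
  rw [← hunion] at hf ⊢
  exact hasSum_integral_iUnion (fun _ => measurableSet_Ioc) hu.pairwise_disjoint_on_Ioc_succ hf

theorem summable_and_norm_tsum_sub_le {ι E : Type*} [NormedAddCommGroup E] [CompleteSpace E]
    {a g : ι → E} {b : ι → ℝ} {G : E} (hg : HasSum g G) (hb : Summable b)
    (hab : ∀ i, ‖a i - g i‖ ≤ b i) : Summable a ∧ ‖∑' i, a i - G‖ ≤ ∑' i, b i := by
  have hnorm : Summable fun i => ‖a i - g i‖ := hb.of_nonneg_of_le (fun _ => norm_nonneg _) hab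
  have ha : Summable a := by simpa using hnorm.of_norm.add hg.summable
  refine ⟨ha, ?_⟩
  rw [← hg.tsum_eq, ← ha.tsum_sub hg.summable]
  exact (norm_tsum_le_tsum_norm hnorm).trans (hnorm.tsum_le_tsum hab hb)

/-- Riemann-sum approximation for an integrable function of bounded variation on `(0,∞)`:
`|Σ_{k≥1} ε Φ(εk) - ∫₀^∞ Φ(t) dt| ≤ ε ‖Φ‖_BV`, the series converging absolutely. -/
theorem stmt_14 (Φ : ℝ → ℝ) (hint : IntegrableOn Φ (Set.Ioi 0))
    (hBV : eVariationOn Φ (Set.Ioi 0) ≠ ⊤) (ε : ℝ) (hε : 0 < ε) :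
    Summable (fun k : ℕ => |ε * Φ (ε * ((k : ℝ) + 1))|) ∧
    |(∑' k : ℕ, ε * Φ (ε * ((k : ℝ) + 1))) - ∫ t in Set.Ioi (0 : ℝ), Φ t| ≤
      ε * (eVariationOn Φ (Set.Ioi 0)).toReal := by
  set u : ℕ → ℝ := fun k => ε * k
  have hu : StrictMono u := (strictMono_mul_left_of_pos hε).comp Nat.strictMono_cast
  have hu0 : u 0 = 0 := by simp [u]
  have hunb : ¬BddAbove (range u) :=
    not_bddAbove_of_tendsto_atTop (tendsto_natCast_atTop_atTop.const_mul_atTop hε)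
  set V : ℕ → ENNReal := fun k => eVariationOn Φ (Ioc (u k) (u (k + 1)))
  have hV : ∑' k, V k ≤ eVariationOn Φ (Ioi 0) := hu0 ▸ tsum_eVariationOn_Ioc_le hu
  have hsub : ∀ k, Ioc (u k) (u (k + 1)) ⊆ Ioi 0 := fun k _ hx =>
    hu0 ▸ (hu.monotone (Nat.zero_le k)).trans_lt hx.1
  have hVfin : ∀ k, V k ≠ ⊤ := fun k => ne_top_of_le_ne_top hBV (eVariationOn.mono Φ (hsub k))
  have hpiece : ∀ k : ℕ, ‖ε * Φ (ε * ((k : ℝ) + 1)) - ∫ t in Ioc (u k) (u (k + 1)), Φ t‖ ≤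
      ε * (V k).toReal := by
    intro k
    have hstep : u (k + 1) - u k = ε := by simp only [u, Nat.cast_succ]; ring
    have hsucc : u (k + 1) = ε * ((k : ℝ) + 1) := by simp [u]
    rw [← hsucc, ← hstep]
    exact norm_sub_smul_setIntegral_Ioc_le (hu k.lt_succ_self) (hint.mono_set (hsub k)) (hVfin k)
  obtain ⟨hsum, hle⟩ := summable_and_norm_tsum_sub_le
    (hasSum_setIntegral_Ioc hu.monotone hunb (hu0 ▸ hint))
    ((ENNReal.summable_toReal (ne_top_of_le_ne_top hBV hV)).mul_left ε) hpiece
  rw [hu0, Real.norm_eq_abs] at hle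
  refine ⟨hsum.abs, hle.trans ?_⟩
  rw [tsum_mul_left, ← ENNReal.tsum_toReal_eq hVfin]
  exact mul_le_mul_of_nonneg_left (ENNReal.toReal_mono hBV hV) hε.le
end

section
/- Let α > 1/2. Then there exists a constant C > 0 such that for all ε ∈ (0,1] and all y ∈ ℝ, Σ_{ℓ=1}^∞ Σ_{m=1}^∞ ε² min(y², (εℓ)^{−2}) min(y², (εm)^{−2}) ℓ^{−α} m^{−α} ≤ C ε |y|³. -/
open scoped BigOperators

private lemma min_le_rpow_mul (a b : ℝ) (ha : 0 ≤ a) (hb : 0 ≤ b) :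
    min a b ≤ a ^ ((3:ℝ)/4) * b ^ ((1:ℝ)/4) := by
  have hm : 0 ≤ min a b := le_min ha hb
  calc min a b = (min a b) ^ ((3:ℝ)/4) * (min a b) ^ ((1:ℝ)/4) := by
        rw [← Real.rpow_add' hm (by norm_num)]; norm_num
    _ ≤ a ^ ((3:ℝ)/4) * b ^ ((1:ℝ)/4) := by
        gcongr
        · exact min_le_left _ _
        · exact min_le_right _ _

private lemma factor_bound (ε y L : ℝ) (hε : 0 < ε) (hL : 0 < L) :
    min (y ^ 2) (((ε * L) ^ 2)⁻¹)
      ≤ |y| ^ ((3:ℝ)/2) * (ε ^ (-(1:ℝ)/2) * L ^ (-(1:ℝ)/2)) := by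
  have h1 : min (y ^ 2) (((ε * L) ^ 2)⁻¹)
      ≤ (y ^ 2) ^ ((3:ℝ)/4) * (((ε * L) ^ 2)⁻¹) ^ ((1:ℝ)/4) :=
    min_le_rpow_mul _ _ (sq_nonneg y) (by positivity)
  have hεL : 0 < ε * L := mul_pos hε hL
  have e1 : (y ^ 2) ^ ((3:ℝ)/4) = |y| ^ ((3:ℝ)/2) := by
    rw [← sq_abs, ← Real.rpow_natCast |y| 2, ← Real.rpow_mul (abs_nonneg y)]
    norm_num
  have e2 : (((ε * L) ^ 2)⁻¹) ^ ((1:ℝ)/4) = ε ^ (-(1:ℝ)/2) * L ^ (-(1:ℝ)/2) := by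
    rw [← Real.rpow_natCast (ε * L) 2, ← Real.rpow_neg hεL.le,
      ← Real.rpow_mul hεL.le, Real.mul_rpow hε.le hL.le]
    norm_num
  rw [e1, e2] at h1
  linarith [h1]

private lemma aux_summable (β : ℝ) (hβ : 1 < β) :
    Summable (fun n : ℕ => ((n : ℝ) + 1) ^ (-β)) := by
  have h : Summable (fun n : ℕ => (((n : ℝ)) ^ β)⁻¹) :=
    (Real.summable_nat_rpow_inv).2 hβ
  have h2 := (summable_nat_add_iff 1).2 h
  refine h2.congr fun n => ?_
  rw [← Real.rpow_neg (by positivity)]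
  push_cast
  ring_nf

/-- Key double-sum estimate in the second-Wiener-chaos computation:
`Σ_{ℓ,m≥1} ε² (y² ∧ (εℓ)⁻²)(y² ∧ (εm)⁻²) ℓ^{-α} m^{-α} ≤ C ε |y|³` for `α > 1/2`. -/
theorem stmt_16 (α : ℝ) (hα : 1 / 2 < α) :
    ∃ C > 0, ∀ ε ∈ Set.Ioc (0 : ℝ) 1, ∀ y : ℝ,
      Summable (fun p : ℕ × ℕ =>
        ε ^ 2 * min (y ^ 2) (((ε * ((p.1 : ℝ) + 1)) ^ 2)⁻¹) *
          min (y ^ 2) (((ε * ((p.2 : ℝ) + 1)) ^ 2)⁻¹) *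
          ((p.1 : ℝ) + 1) ^ (-α) * ((p.2 : ℝ) + 1) ^ (-α)) ∧
      (∑' p : ℕ × ℕ,
        ε ^ 2 * min (y ^ 2) (((ε * ((p.1 : ℝ) + 1)) ^ 2)⁻¹) *
          min (y ^ 2) (((ε * ((p.2 : ℝ) + 1)) ^ 2)⁻¹) *
          ((p.1 : ℝ) + 1) ^ (-α) * ((p.2 : ℝ) + 1) ^ (-α)) ≤ C * ε * |y| ^ 3 := by
  set β : ℝ := α + 1/2 with hβdef
  have hβ : 1 < β := by simp [hβdef]; linarith
  set f1 : ℕ → ℝ := fun n => ((n : ℝ) + 1) ^ (-β) with hf1def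
  have hf1sum : Summable f1 := aux_summable β hβ
  have hf1pos : ∀ n, 0 < f1 n := fun n => Real.rpow_pos_of_pos (by positivity) _
  set S : ℝ := ∑' n, f1 n with hSdef
  have hSpos : 0 < S := Summable.tsum_pos hf1sum (fun n => (hf1pos n).le) 0 (hf1pos 0)
  refine ⟨S ^ 2, by positivity, ?_⟩
  rintro ε ⟨hε, hε1⟩ y
  -- the bounding function
  set g : ℕ × ℕ → ℝ := fun p => (ε * |y| ^ 3) * (f1 p.1 * f1 p.2) with hgdef
  have hgsum : Summable g := by
    have hprod : Summable (fun p : ℕ × ℕ => f1 p.1 * f1 p.2) := by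
      apply summable_mul_of_summable_norm (f := f1) (g := f1) <;>
        · refine hf1sum.congr fun n => ?_
          rw [Real.norm_eq_abs, abs_of_pos (hf1pos n)]
    exact hprod.mul_left _
  -- pointwise bound
  have hterm : ∀ p : ℕ × ℕ,
      ε ^ 2 * min (y ^ 2) (((ε * ((p.1 : ℝ) + 1)) ^ 2)⁻¹) *
        min (y ^ 2) (((ε * ((p.2 : ℝ) + 1)) ^ 2)⁻¹) *
        ((p.1 : ℝ) + 1) ^ (-α) * ((p.2 : ℝ) + 1) ^ (-α) ≤ g p := by
    intro p
    set L : ℝ := (p.1 : ℝ) + 1 with hLdef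
    set M : ℝ := (p.2 : ℝ) + 1 with hMdef
    have hL : 0 < L := by positivity
    have hM : 0 < M := by positivity
    have h1 := factor_bound ε y L hε hL
    have h2 := factor_bound ε y M hε hM
    have key : ε ^ 2 * (|y| ^ ((3:ℝ)/2) * (ε ^ (-(1:ℝ)/2) * L ^ (-(1:ℝ)/2))) *
        (|y| ^ ((3:ℝ)/2) * (ε ^ (-(1:ℝ)/2) * M ^ (-(1:ℝ)/2))) *
        L ^ (-α) * M ^ (-α) = g p := by
      have ey : |y| ^ ((3:ℝ)/2) * |y| ^ ((3:ℝ)/2) = |y| ^ 3 := by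
        rw [← Real.rpow_add' (abs_nonneg y) (by norm_num), ← Real.rpow_natCast |y| 3]
        norm_num
      have eε : ε ^ 2 * (ε ^ (-(1:ℝ)/2) * ε ^ (-(1:ℝ)/2)) = ε := by
        rw [← Real.rpow_add hε, ← Real.rpow_natCast ε 2, ← Real.rpow_add hε]
        norm_num
      have eL : L ^ (-(1:ℝ)/2) * L ^ (-α) = f1 p.1 := by
        rw [hf1def, ← Real.rpow_add hL]
        norm_num [hβdef, hLdef]
      have eM : M ^ (-(1:ℝ)/2) * M ^ (-α) = f1 p.2 := by
        rw [hf1def, ← Real.rpow_add hM]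
        norm_num [hβdef, hMdef]
      calc ε ^ 2 * (|y| ^ ((3:ℝ)/2) * (ε ^ (-(1:ℝ)/2) * L ^ (-(1:ℝ)/2))) *
          (|y| ^ ((3:ℝ)/2) * (ε ^ (-(1:ℝ)/2) * M ^ (-(1:ℝ)/2))) * L ^ (-α) * M ^ (-α)
          = (ε ^ 2 * (ε ^ (-(1:ℝ)/2) * ε ^ (-(1:ℝ)/2))) *
            (|y| ^ ((3:ℝ)/2) * |y| ^ ((3:ℝ)/2)) *
            ((L ^ (-(1:ℝ)/2) * L ^ (-α)) * (M ^ (-(1:ℝ)/2) * M ^ (-α))) := by ring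
        _ = g p := by rw [ey, eε, eL, eM, hgdef]
    calc ε ^ 2 * min (y ^ 2) (((ε * L) ^ 2)⁻¹) * min (y ^ 2) (((ε * M) ^ 2)⁻¹) *
          L ^ (-α) * M ^ (-α)
        ≤ ε ^ 2 * (|y| ^ ((3:ℝ)/2) * (ε ^ (-(1:ℝ)/2) * L ^ (-(1:ℝ)/2))) *
          (|y| ^ ((3:ℝ)/2) * (ε ^ (-(1:ℝ)/2) * M ^ (-(1:ℝ)/2))) *
          L ^ (-α) * M ^ (-α) := by
          gcongr
      _ = g p := key
  have htermnn : ∀ p : ℕ × ℕ,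
      0 ≤ ε ^ 2 * min (y ^ 2) (((ε * ((p.1 : ℝ) + 1)) ^ 2)⁻¹) *
        min (y ^ 2) (((ε * ((p.2 : ℝ) + 1)) ^ 2)⁻¹) *
        ((p.1 : ℝ) + 1) ^ (-α) * ((p.2 : ℝ) + 1) ^ (-α) := by
    intro p
    have h1 : 0 ≤ min (y ^ 2) (((ε * ((p.1 : ℝ) + 1)) ^ 2)⁻¹) :=
      le_min (sq_nonneg y) (by positivity)
    have h2 : 0 ≤ min (y ^ 2) (((ε * ((p.2 : ℝ) + 1)) ^ 2)⁻¹) :=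
      le_min (sq_nonneg y) (by positivity)
    have h3 : (0:ℝ) ≤ ((p.1 : ℝ) + 1) ^ (-α) := Real.rpow_nonneg (by positivity) _
    have h4 : (0:ℝ) ≤ ((p.2 : ℝ) + 1) ^ (-α) := Real.rpow_nonneg (by positivity) _
    positivity
  have hsum : Summable (fun p : ℕ × ℕ =>
      ε ^ 2 * min (y ^ 2) (((ε * ((p.1 : ℝ) + 1)) ^ 2)⁻¹) *
        min (y ^ 2) (((ε * ((p.2 : ℝ) + 1)) ^ 2)⁻¹) *
        ((p.1 : ℝ) + 1) ^ (-α) * ((p.2 : ℝ) + 1) ^ (-α)) :=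
    Summable.of_nonneg_of_le htermnn hterm hgsum
  refine ⟨hsum, ?_⟩
  have hle := Summable.tsum_le_tsum hterm hsum hgsum
  have hg : ∑' p, g p = S ^ 2 * ε * |y| ^ 3 := by
    rw [hgdef]
    rw [tsum_mul_left]
    have : ∑' p : ℕ × ℕ, f1 p.1 * f1 p.2 = S * S := by
      rw [hSdef]
      refine (tsum_mul_tsum_of_summable_norm ?_ ?_).symm <;>
        · refine hf1sum.congr fun n => ?_
          rw [Real.norm_eq_abs, abs_of_pos (hf1pos n)]
    rw [this]; ring
  calc (∑' p : ℕ × ℕ,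
        ε ^ 2 * min (y ^ 2) (((ε * ((p.1 : ℝ) + 1)) ^ 2)⁻¹) *
          min (y ^ 2) (((ε * ((p.2 : ℝ) + 1)) ^ 2)⁻¹) *
          ((p.1 : ℝ) + 1) ^ (-α) * ((p.2 : ℝ) + 1) ^ (-α)) ≤ ∑' p, g p := hle
    _ = S ^ 2 * ε * |y| ^ 3 := hg
end
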